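/- arXiv:1601.02792 — 3 statements merged into one kernel-verified Lean document; each statement's English description precedes it below -/
import Mathlib

section
/- Let G be a graph whose vertex set is a disjoint union A_0 ∪ A_1 ∪ ··· ∪ A_n and each of whose edges joins a vertex of A_{i−1} to a vertex of A_i for some i. For i = 1, …, n, let X_i be the simplicial complex on A_{i−1} ∪ A_i whose Stanley–Reisner ideal is the edge ideal of the bipartite graph of edges between A_{i−1} and A_i. Let X be the simplicial complex on A_0 ∪ ··· ∪ A_n whose Stanley–Reisner ideal is generated by the monomials x_{a_0} x_{a_1} ··· x_{a_n} with a_i ∈ A_i and {a_{i−1}, a_i} an edge of G for every i. Then X is homotopy equivalent to the join X_1 * X_2 * ··· * X_n. -/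
/-!
Common infrastructure: abstract simplicial complexes, geometric realization,
homotopy equivalence, reduced simplicial cohomology, squarefree monomial ideals
(encoded as upward closed families of finite sets), Koszul-complex multigraded
Betti numbers, and letterplace ideals of posets.
-/

noncomputable section

open Finset

attribute [local instance] Classical.propDecidable

universe u v w

/-- An abstract simplicial complex on the vertex type `V`: a collection of
finite subsets of `V` (the faces) closed under taking subsets. -/
structure SComplex (V : Type u) where
  faces : Set (Finset V)
  down_closed : ∀ {F G : Finset V}, F ∈ faces → G ⊆ F → G ∈ faces

namespace SComplex

/-- The geometric realization of a simplicial complex: the subspace of `V → ℝ`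
consisting of the convex weight functions supported on a face. -/
def realization {V : Type u} [Fintype V] (X : SComplex V) : Set (V → ℝ) :=
  {f | (∀ v, 0 ≤ f v) ∧ (∑ v, f v) = 1 ∧ ∃ F ∈ X.faces, ∀ v, f v ≠ 0 → v ∈ F}

/-- Two simplicial complexes are homotopy equivalent if their geometric
realizations are homotopy equivalent topological spaces. -/
def HEquiv {V : Type u} {W : Type v} [Fintype V] [Fintype W]
    (X : SComplex V) (Y : SComplex W) : Prop :=
  Nonempty (ContinuousMap.HomotopyEquiv X.realization Y.realization)

/-- Isomorphism ("equality up to relabeling of vertices") of simplicial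
complexes: an order isomorphism between the face posets. -/
def IsIsomorphic {V : Type u} {W : Type v} (X : SComplex V) (Y : SComplex W) : Prop :=
  Nonempty ({F : Finset V // F ∈ X.faces} ≃o {G : Finset W // G ∈ Y.faces})

/-- The induced subcomplex on a subset `S` of the vertex set. -/
def restrict {V : Type u} (X : SComplex V) (S : Set V) : SComplex V where
  faces := {F | F ∈ X.faces ∧ ∀ v ∈ F, v ∈ S}
  down_closed := by
    intro F G hF hGF
    exact ⟨X.down_closed hF.1 hGF, fun v hv => hF.2 v (hGF hv)⟩

/-- The join of two simplicial complexes (on the disjoint union of the two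
vertex types). -/
def join {V : Type u} {W : Type v} (X : SComplex V) (Y : SComplex W) :
    SComplex (V ⊕ W) where
  faces := {F | F.preimage Sum.inl Sum.inl_injective.injOn ∈ X.faces ∧
                F.preimage Sum.inr Sum.inr_injective.injOn ∈ Y.faces}
  down_closed := by
    intro F G hF hGF
    constructor
    · exact X.down_closed hF.1 fun x hx => by
        simp only [Finset.mem_preimage] at hx ⊢
        exact hGF hx
    · exact Y.down_closed hF.2 fun x hx => by
        simp only [Finset.mem_preimage] at hx ⊢
        exact hGF hx

/-- The join of a finite family of simplicial complexes on pairwise disjoint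
vertex types. -/
def bigJoin {ι : Type u} {V : ι → Type v} (X : ∀ i, SComplex (V i)) :
    SComplex (Σ i, V i) where
  faces := {F | ∀ i, F.preimage (Sigma.mk i) sigma_mk_injective.injOn ∈ (X i).faces}
  down_closed := by
    intro F G hF hGF i
    exact (X i).down_closed (hF i) fun x hx => by
      simp only [Finset.mem_preimage] at hx ⊢
      exact hGF hx

/-- The simplicial complex consisting of two disjoint points. -/
def twoPoint : SComplex Bool where
  faces := {F | F.card ≤ 1}
  down_closed := by
    intro F G hF hGF
    exact le_trans (Finset.card_le_card hGF) hF

/-- The suspension of a simplicial complex: its join with two points. -/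
def suspension {V : Type u} (X : SComplex V) : SComplex (V ⊕ Bool) :=
  join X twoPoint

/-- Vertex type of the `m`-fold iterated suspension. -/
def SuspType (V : Type u) : ℕ → Type u
  | 0 => V
  | m + 1 => SuspType V m ⊕ Bool

/-- The `m`-fold iterated suspension of a simplicial complex. -/
def iterSusp {V : Type u} (X : SComplex V) : (m : ℕ) → SComplex (SuspType V m)
  | 0 => X
  | m + 1 => suspension (iterSusp X m)

end SComplex

/-- Position of `x` with respect to a finite set: the number of elements of `F`
preceding `x` in a fixed well-ordering of the vertex type.  Used for the signs
in (co)chain complexes. -/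
def vpos {V : Type u} (F : Finset V) (x : V) : ℕ :=
  (F.filter fun w => WellOrderingRel w x).card

namespace SComplex

variable (k : Type w) [Field k]

/-- The faces of dimension `i` (i.e. of cardinality `i + 1`), `i ∈ ℤ`. -/
abbrev Face {V : Type u} (X : SComplex V) (i : ℤ) : Type u :=
  {F : Finset V // F ∈ X.faces ∧ (F.card : ℤ) = i + 1}

/-- Reduced simplicial `i`-cochains of `X` with coefficients in `k`
(the empty face in dimension `-1` is included). -/
abbrev cochain {V : Type u} (X : SComplex V) (i : ℤ) : Type (max u w) :=
  Face X i → k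

/-- Evaluation of a cochain on an arbitrary finite set (zero if the set is not
a face of the appropriate dimension). -/
def evalC {V : Type u} {X : SComplex V} {i : ℤ} (f : cochain k X i) (F : Finset V) : k :=
  if h : F ∈ X.faces ∧ (F.card : ℤ) = i + 1 then f ⟨F, h⟩ else 0

theorem evalC_add {V : Type u} {X : SComplex V} {i : ℤ} (f g : cochain k X i)
    (F : Finset V) : evalC k (f + g) F = evalC k f F + evalC k g F := by
  unfold evalC
  split_ifs <;> simp

theorem evalC_smul {V : Type u} {X : SComplex V} {i : ℤ} (s : k) (f : cochain k X i)
    (F : Finset V) : evalC k (s • f) F = s * evalC k f F := by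
  unfold evalC
  split_ifs <;> simp

/-- The simplicial coboundary map on reduced cochains. -/
def coboundary {V : Type u} (X : SComplex V) (i : ℤ) :
    cochain k X i →ₗ[k] cochain k X (i + 1) where
  toFun f F := ∑ v ∈ F.1, ((-1 : k) ^ vpos F.1 v) * evalC k f (F.1.erase v)
  map_add' f g := by
    funext F
    show (∑ v ∈ F.1, ((-1 : k) ^ vpos F.1 v) * evalC k (f + g) (F.1.erase v))
      = (∑ v ∈ F.1, ((-1 : k) ^ vpos F.1 v) * evalC k f (F.1.erase v))
      + (∑ v ∈ F.1, ((-1 : k) ^ vpos F.1 v) * evalC k g (F.1.erase v))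
    rw [← Finset.sum_add_distrib]
    exact Finset.sum_congr rfl fun v _ => by rw [evalC_add, mul_add]
  map_smul' s f := by
    funext F
    show (∑ v ∈ F.1, ((-1 : k) ^ vpos F.1 v) * evalC k (s • f) (F.1.erase v))
      = s * ∑ v ∈ F.1, ((-1 : k) ^ vpos F.1 v) * evalC k f (F.1.erase v)
    rw [Finset.mul_sum]
    exact Finset.sum_congr rfl fun v _ => by rw [evalC_smul]; ring

/-- The dimension of the `i`-th reduced simplicial cohomology of `X` with
coefficients in the field `k` (computed as `dim ker d^i - dim im d^(i-1)`). -/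
def redCohomDim {V : Type u} (X : SComplex V) (i : ℤ) : ℕ :=
  Module.finrank k (LinearMap.ker (coboundary k X i)) -
    Module.finrank k (LinearMap.range (coboundary k X (i - 1)))

/-- The generating series `t·H̃(X,t) = ∑_{i ≥ -1} t^{i+1} dim_k H̃^i(X;k)`,
an element of `ℕ⟦t⟧`. -/
def hSeries {V : Type u} (X : SComplex V) : PowerSeries ℕ :=
  PowerSeries.mk fun m => redCohomDim k X ((m : ℤ) - 1)

end SComplex

/-- A squarefree monomial ideal on the set of variables `W`, encoded by the
upward closed family of the supports of the squarefree monomials belonging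
to it. -/
structure SqfIdeal (W : Type u) where
  carrier : Set (Finset W)
  up_closed : ∀ {S T : Finset W}, S ∈ carrier → S ⊆ T → T ∈ carrier

namespace SqfIdeal

/-- The basis of the degree-`R` strand of the Koszul complex `K(x;I)` in
homological degree `i`. -/
abbrev KBasis {W : Type u} (I : SqfIdeal W) (R : Finset W) (i : ℤ) : Type u :=
  {S : Finset W // S ⊆ R ∧ (S.card : ℤ) = i ∧ R \ S ∈ I.carrier}

/-- The degree-`R` strand of the Koszul complex of `I`, in homological
degree `i`, with coefficients in `k`. -/
abbrev kchain (k : Type w) [Field k] {W : Type u} (I : SqfIdeal W) (R : Finset W)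
    (i : ℤ) : Type (max u w) :=
  KBasis I R i → k

variable (k : Type w) [Field k]

/-- Evaluation of a Koszul chain on an arbitrary finite set. -/
def evalK {W : Type u} {I : SqfIdeal W} {R : Finset W} {i : ℤ}
    (f : kchain k I R i) (S : Finset W) : k :=
  if h : S ⊆ R ∧ (S.card : ℤ) = i ∧ R \ S ∈ I.carrier then f ⟨S, h⟩ else 0

theorem evalK_add {W : Type u} {I : SqfIdeal W} {R : Finset W} {i : ℤ}
    (f g : kchain k I R i) (S : Finset W) :
    evalK k (f + g) S = evalK k f S + evalK k g S := by
  unfold evalK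
  split_ifs <;> simp

theorem evalK_smul {W : Type u} {I : SqfIdeal W} {R : Finset W} {i : ℤ}
    (s : k) (f : kchain k I R i) (S : Finset W) :
    evalK k (s • f) S = s * evalK k f S := by
  unfold evalK
  split_ifs <;> simp

/-- The Koszul differential on the degree-`R` strand (as a map of the dual
function spaces). -/
def koszulD {W : Type u} (I : SqfIdeal W) (R : Finset W) (i : ℤ) :
    kchain k I R i →ₗ[k] kchain k I R (i - 1) where
  toFun f S := ∑ v ∈ R \ S.1, ((-1 : k) ^ vpos S.1 v) * evalK k f (insert v S.1)
  map_add' f g := by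
    funext S
    show (∑ v ∈ R \ S.1, ((-1 : k) ^ vpos S.1 v) * evalK k (f + g) (insert v S.1))
      = (∑ v ∈ R \ S.1, ((-1 : k) ^ vpos S.1 v) * evalK k f (insert v S.1))
      + (∑ v ∈ R \ S.1, ((-1 : k) ^ vpos S.1 v) * evalK k g (insert v S.1))
    rw [← Finset.sum_add_distrib]
    exact Finset.sum_congr rfl fun v _ => by rw [evalK_add, mul_add]
  map_smul' s f := by
    funext S
    show (∑ v ∈ R \ S.1, ((-1 : k) ^ vpos S.1 v) * evalK k (s • f) (insert v S.1))
      = s * ∑ v ∈ R \ S.1, ((-1 : k) ^ vpos S.1 v) * evalK k f (insert v S.1)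
    rw [Finset.mul_sum]
    exact Finset.sum_congr rfl fun v _ => by rw [evalK_smul]; ring

end SqfIdeal

/-- The multigraded Betti number `β_{i,R}(I) = dim_k Tor_i(I,k)_R` of a
squarefree monomial ideal in the squarefree multidegree `R`, computed as the
dimension of the `i`-th homology of the degree-`R` strand of the Koszul
complex. -/
def multiBetti (k : Type w) [Field k] {W : Type u} (I : SqfIdeal W) (i : ℤ)
    (R : Finset W) : ℕ :=
  Module.finrank k (LinearMap.ker (SqfIdeal.koszulD k I R i)) -
    Module.finrank k (LinearMap.range (SqfIdeal.koszulD k I R (i + 1)))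

/-- The graded Betti number `β_{i,j}(I) = dim_k Tor_i(I,k)_j` of a squarefree
monomial ideal: the sum of the multigraded Betti numbers over the (squarefree)
multidegrees of cardinality `j`. -/
def gradedBetti (k : Type w) [Field k] {W : Type u} [Fintype W] (I : SqfIdeal W)
    (i : ℤ) (j : ℤ) : ℕ :=
  if 0 ≤ j then
    ∑ R ∈ Finset.powersetCard j.toNat (Finset.univ : Finset W), multiBetti k I i R
  else 0

/-- The `n`-th letterplace ideal `L(n,P)` of a poset `P`: the squarefree
monomial ideal on the variables `x_{(i,p)}`, `(i,p) ∈ [n] × P`, generated by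
the monomials `x_{(1,p₁)} ⋯ x_{(n,pₙ)}` with `p₁ ≤ p₂ ≤ ⋯ ≤ pₙ` in `P`. -/
def letterplace (n : ℕ) (P : Type u) [PartialOrder P] : SqfIdeal (Fin n × P) where
  carrier := {T | ∃ c : Fin n → P, Monotone c ∧ ∀ i, (i, c i) ∈ T}
  up_closed := by
    rintro S T ⟨c, hc, hm⟩ hST
    exact ⟨c, hc, fun i => hST (hm i)⟩

/-- The `i`-th part `R_i ⊆ P` of a multidegree `R ⊆ [n] × P`. -/
def part {n : ℕ} {P : Type u} (R : Finset (Fin n × P)) (i : Fin n) : Finset P :=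
  (R.filter fun q => q.1 = i).image Prod.snd

/-- The set of maximal elements of the induced subposet on `A`. -/
def maxSet {P : Type u} [PartialOrder P] (A : Finset P) : Finset P :=
  A.filter fun a => ∀ b ∈ A, a ≤ b → a = b

/-- The set of minimal elements of the induced subposet on `A`. -/
def minSet {P : Type u} [PartialOrder P] (A : Finset P) : Finset P :=
  A.filter fun a => ∀ b ∈ A, b ≤ a → a = b

/-- The transitive order `A ≤ B` on subsets of a poset: every maximal element
of `A` is below some minimal element of `B`, and every minimal element of `B`
is above some maximal element of `A`. -/
def subsetLE {P : Type u} [PartialOrder P] (A B : Finset P) : Prop :=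
  (∀ a ∈ maxSet A, ∃ b ∈ minSet B, a ≤ b) ∧
  (∀ b ∈ minSet B, ∃ a ∈ maxSet A, a ≤ b)

/-- The independence complex of the bipartite graph on two disjoint copies of
`P`, with left vertex set `A`, right vertex set `B`, and edges the pairs
`(p, q) ∈ A × B` with `p ≤ q` in `P`. -/
def XComplex {P : Type u} [PartialOrder P] (A B : Finset P) : SComplex (P ⊕ P) where
  faces := {F | (∀ x ∈ F, Sum.elim (· ∈ A) (· ∈ B) x) ∧
                ∀ p q : P, Sum.inl p ∈ F → Sum.inr q ∈ F → ¬ p ≤ q}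
  down_closed := by
    intro F G hF hGF
    exact ⟨fun x hx => hF.1 x (hGF hx), fun p q hp hq => hF.2 p q (hGF hp) (hGF hq)⟩

/-- `Y₁`: the simplicial complex on `A` whose faces are the subsets `F ⊆ A`
such that some `b ∈ B` dominates no element of `F`. -/
def Y1Complex {P : Type u} [PartialOrder P] (A B : Finset P) : SComplex P where
  faces := {F | (∀ x ∈ F, x ∈ A) ∧ ∃ b ∈ B, ∀ a ∈ F, ¬ a ≤ b}
  down_closed := by
    rintro F G ⟨hFA, b, hb, hFb⟩ hGF
    exact ⟨fun x hx => hFA x (hGF hx), b, hb, fun a ha => hFb a (hGF ha)⟩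

/-- `Y₂`: the simplicial complex on `B` whose faces are the subsets `F ⊆ B`
such that some `a ∈ A` is dominated by no element of `F`. -/
def Y2Complex {P : Type u} [PartialOrder P] (A B : Finset P) : SComplex P where
  faces := {F | (∀ x ∈ F, x ∈ B) ∧ ∃ a ∈ A, ∀ b ∈ F, ¬ a ≤ b}
  down_closed := by
    rintro F G ⟨hFB, a, ha, hFa⟩ hGF
    exact ⟨fun x hx => hFB x (hGF hx), a, ha, fun b hb => hFa b (hGF hb)⟩

/-- The restriction `Δ(n,P)|_R` of the Stanley–Reisner complex of the
letterplace ideal `L(n,P)` to the vertex set `R`. -/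
def deltaRes (n : ℕ) (P : Type u) [PartialOrder P] (R : Finset (Fin n × P)) :
    SComplex (Fin n × P) where
  faces := {F | F ⊆ R ∧ ¬ ∃ c : Fin n → P, Monotone c ∧ ∀ i, (i, c i) ∈ F}
  down_closed := by
    rintro F G ⟨hFR, hF⟩ hGF
    exact ⟨hGF.trans hFR, fun ⟨c, hc, hm⟩ => hF ⟨c, hc, fun i => hGF (hm i)⟩⟩

/-- `A` is a maximal antichain of the poset `P`. -/
def IsMaxAntichainFinset {P : Type u} [PartialOrder P] (A : Finset P) : Prop :=
  IsAntichain (· ≤ ·) (A : Set P) ∧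
    ∀ B : Finset P, IsAntichain (· ≤ ·) (B : Set P) → A ⊆ B → A = B

/-- The maximal cardinality of an antichain in the finite poset `P`. -/
def maxAntichainCard (P : Type u) [PartialOrder P] [Fintype P] : ℕ :=
  Finset.sup (Finset.univ.filter fun A : Finset P => IsAntichain (· ≤ ·) (A : Set P))
    Finset.card

/-- The independence complex of a bipartite graph, with parts `A` and `B` and
edge relation `E`. -/
def bipIndep {A : Type u} {B : Type v} (E : A → B → Prop) : SComplex (A ⊕ B) where
  faces := {F | ∀ a b, Sum.inl a ∈ F → Sum.inr b ∈ F → ¬ E a b}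
  down_closed := by
    intro F G hF hGF a b ha hb
    exact hF a b (hGF ha) (hGF hb)

/-- The simplicial complex on `A₀ ∪ ⋯ ∪ Aₙ` whose Stanley–Reisner ideal is
generated by the monomials `x_{a₀} x_{a₁} ⋯ x_{aₙ}` with `aᵢ ∈ Aᵢ` and
`{a_{i-1}, a_i}` an edge for every `i`; its faces are the sets containing no
full edge path from `A₀` to `Aₙ`. -/
def pathComplex (n : ℕ) (A : Fin (n + 1) → Type u)
    (E : ∀ i : Fin n, A i.castSucc → A i.succ → Prop) : SComplex (Σ i, A i) where
  faces := {F | ¬ ∃ a : ∀ i, A i,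
    (∀ i : Fin n, E i (a i.castSucc) (a i.succ)) ∧
    ∀ i, (⟨i, a i⟩ : Σ j, A j) ∈ F}
  down_closed := by
    rintro F G hF hGF ⟨a, hE, hm⟩
    exact hF ⟨a, hE, fun i => hGF (hm i)⟩

/-!
The vertices of the join are copies of the vertices of `pathComplex`, one in each block
`Aᵢ₋₁ ⊔ Aᵢ` containing the vertex, and the join is the independence complex of the graph whose
edges are the copies of the edges of the layered graph. Adding up the weights of the copies sends
the join into `pathComplex`: an independent set cannot contain copies of all vertices of a full
path. Conversely, a point `f` of `pathComplex` gives every copy the weight of its vertex, each copy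
keeps only the amount `max (g w - ∑_{w' ~ w} g w') 0` by which it outweighs its neighbours, and
the result is renormalised. The surviving copies are independent, and some copy survives: if every
copy over the support of `f` had a neighbour over it, one could walk back to `A₀` and then forward
to `Aₙ` along a full path inside a face. Both composites are homotopic to the identity along
straight segments, taken on the join side before the cancellation, which fixes the join.
-/

theorem ContinuousMap.homotopic_of_segment_subset {Y E : Type*} [TopologicalSpace Y]
    [AddCommGroup E] [TopologicalSpace E] [IsTopologicalAddGroup E] [Module ℝ E]
    [ContinuousSMul ℝ E] {s : Set E} (f g : C(Y, s)) (h : ∀ y, segment ℝ (f y : E) (g y) ⊆ s) :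
    f.Homotopic g := by
  let H := ContinuousMap.Homotopy.affine (.comp ⟨_, continuous_subtype_val⟩ f)
    (.comp ⟨_, continuous_subtype_val⟩ g)
  exact ⟨{
    toFun p := ⟨H p, h p.2 (lineMap_mem_segment ℝ _ _ p.1.2)⟩
    continuous_toFun := H.continuous.subtype_mk _
    map_zero_left y := Subtype.ext (H.apply_zero y)
    map_one_left y := Subtype.ext (H.apply_one y) }⟩

theorem Sigma.mk_eq_mk_apply_iff {ι : Type*} {β : ι → Type*} (a : ∀ i, β i) {i j : ι}
    (x : β i) : (⟨i, x⟩ : Sigma β) = ⟨j, a j⟩ ↔ i = j ∧ x = a i := by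
  constructor
  · rintro ⟨⟩
    exact ⟨rfl, rfl⟩
  · rintro ⟨rfl, rfl⟩
    rfl

attribute [ext] SComplex

namespace SComplex

def indepComplex {W : Type*} (G : SimpleGraph W) : SComplex W where
  faces := {F | G.IsIndepSet (F : Set W)}
  down_closed hF hGF := hF.mono (by simpa using hGF)

variable {V W : Type*}

section Realization

variable [Fintype V] {X : SComplex V}

theorem segment_subset_realization {f g : V → ℝ} (hf : f ∈ X.realization)
    (hg : g ∈ X.realization) {F : Finset V} (hF : F ∈ X.faces)
    (hfF : ∀ v, f v ≠ 0 → v ∈ F) (hgF : ∀ v, g v ≠ 0 → v ∈ F) :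
    segment ℝ f g ⊆ X.realization := by
  rintro _ ⟨a, b, ha, hb, hab, rfl⟩
  refine ⟨fun v => ?_, ?_, F, hF, fun v hv => ?_⟩
  · simp only [Pi.add_apply, Pi.smul_apply, smul_eq_mul]
    exact add_nonneg (mul_nonneg ha (hf.1 v)) (mul_nonneg hb (hg.1 v))
  · simp only [Pi.add_apply, Pi.smul_apply, smul_eq_mul, sum_add_distrib, ← mul_sum, hf.2.1,
      hg.2.1, hab, mul_one]
  · by_contra hvF
    apply hv
    simp only [Pi.add_apply, Pi.smul_apply, smul_eq_mul, not_imp_comm.1 (hfF v) hvF,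
      not_imp_comm.1 (hgF v) hvF, mul_zero, add_zero]

theorem filter_pos_mem_faces {f : V → ℝ} (hf : f ∈ X.realization) :
    ({v | 0 < f v} : Finset V) ∈ X.faces := by
  obtain ⟨-, -, F, hF, hsupp⟩ := hf
  exact X.down_closed hF fun v hv => hsupp v (mem_filter.1 hv).2.ne'

theorem filter_pos_nonempty {f : V → ℝ} (hf : f ∈ X.realization) :
    ({v | 0 < f v} : Finset V).Nonempty := by
  obtain ⟨v, -, hv⟩ := exists_lt_of_sum_lt (s := univ) (f := 0) (g := f) (by simp [hf.2.1])
  exact ⟨v, mem_filter.2 ⟨mem_univ v, hv⟩⟩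

end Realization

section Weights

variable [Fintype W] (μ : W → V) (G : SimpleGraph W)

def pushforward (g : W → ℝ) (v : V) : ℝ :=
  ∑ w with μ w = v, g w

def cancelConflicts (g : W → ℝ) (w : W) : ℝ :=
  max (g w - ∑ w' with G.Adj w w', g w') 0

def resolveConflicts (g : W → ℝ) (w : W) : ℝ :=
  cancelConflicts G g w / ∑ w', cancelConflicts G g w'

def resolvable : Set (W → ℝ) :=
  {g | (∀ w, 0 ≤ g w) ∧ 0 < ∑ w, cancelConflicts G g w}

variable {μ G}

theorem sum_pushforward [Fintype V] (g : W → ℝ) : ∑ v, pushforward μ g v = ∑ w, g w :=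
  sum_fiberwise _ _ _

theorem pushforward_nonneg {g : W → ℝ} (hg : ∀ w, 0 ≤ g w) (v : V) :
    0 ≤ pushforward μ g v :=
  sum_nonneg fun w _ => hg w

theorem le_pushforward {g : W → ℝ} (hg : ∀ w, 0 ≤ g w) (w : W) :
    g w ≤ pushforward μ g (μ w) :=
  single_le_sum (fun w' _ => hg w') (by simp)

theorem exists_ne_zero_of_pushforward_ne_zero {g : W → ℝ} {v : V}
    (h : pushforward μ g v ≠ 0) : ∃ w, μ w = v ∧ g w ≠ 0 := by
  obtain ⟨w, hw, hgw⟩ := exists_ne_zero_of_sum_ne_zero h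
  exact ⟨w, (mem_filter.1 hw).2, hgw⟩

theorem continuous_pushforward : Continuous (pushforward μ) := by
  unfold pushforward
  fun_prop

theorem cancelConflicts_nonneg (g : W → ℝ) (w : W) : 0 ≤ cancelConflicts G g w :=
  le_max_right _ _

theorem cancelConflicts_le {g : W → ℝ} (hg : ∀ w, 0 ≤ g w) (w : W) :
    cancelConflicts G g w ≤ g w :=
  max_le (sub_le_self _ (sum_nonneg fun w' _ => hg w')) (hg w)

theorem cancelConflicts_pos {g : W → ℝ} {w : W} (hw : 0 < g w)
    (hnbr : ∀ w', G.Adj w w' → g w' = 0) : 0 < cancelConflicts G g w := by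
  rw [cancelConflicts, sum_eq_zero fun w' hw' => hnbr w' (mem_filter.1 hw').2, sub_zero]
  exact lt_max_of_lt_left hw

theorem lt_of_cancelConflicts_pos {g : W → ℝ} (hg : ∀ w, 0 ≤ g w) {w w' : W}
    (hadj : G.Adj w w') (hw : 0 < cancelConflicts G g w) : g w' < g w := by
  have hle : g w' ≤ ∑ w'' with G.Adj w w'', g w'' :=
    single_le_sum (fun w'' _ => hg w'') (by simpa using hadj)
  have hlt : ∑ w'' with G.Adj w w'', g w'' < g w := by
    by_contra! h
    exact hw.ne' (max_eq_right (by linarith))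
  linarith

theorem continuous_cancelConflicts : Continuous (cancelConflicts G) := by
  unfold cancelConflicts
  fun_prop

theorem support_cancelConflicts_mem_faces {g : W → ℝ} (hg : ∀ w, 0 ≤ g w) :
    ({w | cancelConflicts G g w ≠ 0} : Finset W) ∈ (indepComplex G).faces := by
  intro w hw w' hw' _ hadj
  simp only [coe_filter, mem_univ, true_and, Set.mem_ofPred_eq] at hw hw'
  have h := lt_of_cancelConflicts_pos hg hadj ((cancelConflicts_nonneg g w).lt_of_ne' hw)
  have h' := lt_of_cancelConflicts_pos hg hadj.symm ((cancelConflicts_nonneg g w').lt_of_ne' hw')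
  linarith

theorem cancelConflicts_eq_self {g : W → ℝ} (hg : ∀ w, 0 ≤ g w) {F : Finset W}
    (hF : F ∈ (indepComplex G).faces) (hsupp : ∀ w, g w ≠ 0 → w ∈ F) :
    cancelConflicts G g = g := by
  funext w
  rcases eq_or_ne (g w) 0 with h | h
  · rw [cancelConflicts, h, max_eq_right (sub_nonpos.2 (sum_nonneg fun w' _ => hg w'))]
  · have hnbr : ∀ w', G.Adj w w' → g w' = 0 := fun w' hadj => by
      by_contra h'
      exact hF (hsupp w h) (hsupp w' h') hadj.ne hadj
    rw [cancelConflicts, sum_eq_zero fun w' hw' => hnbr w' (mem_filter.1 hw').2, sub_zero,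
      max_eq_left (hg w)]

theorem resolveConflicts_mem_realization {g : W → ℝ} (hg : g ∈ resolvable G) :
    resolveConflicts G g ∈ (indepComplex G).realization := by
  refine ⟨fun w => div_nonneg (cancelConflicts_nonneg g w) hg.2.le, ?_,
    _, support_cancelConflicts_mem_faces hg.1, fun w hw => ?_⟩
  · simp only [resolveConflicts, ← sum_div, div_self hg.2.ne']
  · simpa using (div_ne_zero_iff.1 hw).1

theorem resolveConflicts_eq_self {h : W → ℝ} (hh : h ∈ (indepComplex G).realization) :
    resolveConflicts G h = h := by
  obtain ⟨h0, h1, F, hF, hsupp⟩ := hh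
  funext w
  rw [resolveConflicts, cancelConflicts_eq_self h0 hF hsupp, h1, div_one]

theorem mem_resolvable_of_mem_realization {h : W → ℝ}
    (hh : h ∈ (indepComplex G).realization) : h ∈ resolvable G := by
  obtain ⟨h0, h1, F, hF, hsupp⟩ := hh
  exact ⟨h0, by rw [cancelConflicts_eq_self h0 hF hsupp, h1]; exact one_pos⟩

theorem sum_cancelConflicts_pos {X : SComplex V}
    (hisol : ∀ S ∈ X.faces, S.Nonempty → ∃ w, μ w ∈ S ∧ ∀ w', μ w' ∈ S → ¬G.Adj w w')
    {g : W → ℝ} (hg : ∀ w, 0 ≤ g w) {S : Finset V} (hS : S ∈ X.faces) (hne : S.Nonempty)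
    (hsupp : ∀ w, 0 < g w ↔ μ w ∈ S) : 0 < ∑ w, cancelConflicts G g w := by
  obtain ⟨w, hwS, hw⟩ := hisol S hS hne
  refine sum_pos' (fun w _ => cancelConflicts_nonneg g w) ⟨w, mem_univ w, ?_⟩
  exact cancelConflicts_pos ((hsupp w).2 hwS) fun w' hadj =>
    le_antisymm (not_lt.1 fun h => hw w' ((hsupp w').1 h) hadj) (hg w')

theorem pushforward_resolveConflicts_ne_zero {f : V → ℝ} (hf : ∀ v, 0 ≤ f v) {v : V}
    (h : pushforward μ (resolveConflicts G (f ∘ μ)) v ≠ 0) : f v ≠ 0 := by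
  obtain ⟨w, rfl, hw⟩ := exists_ne_zero_of_pushforward_ne_zero h
  intro hzero
  have hle := cancelConflicts_le (G := G) (g := f ∘ μ) (fun w => hf (μ w)) w
  rw [Function.comp_apply, hzero] at hle
  exact (div_ne_zero_iff.1 hw).1 (le_antisymm hle (cancelConflicts_nonneg _ w))

def resolveConflictsMap : C(resolvable G, (indepComplex G).realization) where
  toFun g := ⟨resolveConflicts G g, resolveConflicts_mem_realization g.2⟩
  continuous_toFun := by
    refine Continuous.subtype_mk (continuous_pi fun w => ?_) _
    have hc : Continuous fun g : resolvable G => cancelConflicts G g :=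
      continuous_cancelConflicts.comp continuous_subtype_val
    exact ((continuous_apply w).comp hc).div (continuous_finsetSum _ fun w' _ =>
      (continuous_apply w').comp hc) fun g => g.2.2.ne'

end Weights

section Collapse

variable [Fintype V] [Fintype W] {X : SComplex V} {μ : W → V} {G : SimpleGraph W}

theorem comp_mem_resolvable
    (hisol : ∀ S ∈ X.faces, S.Nonempty → ∃ w, μ w ∈ S ∧ ∀ w', μ w' ∈ S → ¬G.Adj w w')
    {f : V → ℝ} (hf : f ∈ X.realization) : f ∘ μ ∈ resolvable G :=
  ⟨fun w => hf.1 (μ w), sum_cancelConflicts_pos hisol (fun w => hf.1 (μ w))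
    (filter_pos_mem_faces hf) (filter_pos_nonempty hf) fun w => by simp⟩

def pullbackMap
    (hisol : ∀ S ∈ X.faces, S.Nonempty → ∃ w, μ w ∈ S ∧ ∀ w', μ w' ∈ S → ¬G.Adj w w') :
    C(X.realization, resolvable G) where
  toFun f := ⟨f.1 ∘ μ, comp_mem_resolvable hisol f.2⟩
  continuous_toFun :=
    ((continuous_pi fun w => continuous_apply (μ w)).comp continuous_subtype_val).subtype_mk _

variable [DecidableEq V]

theorem pushforward_mem_realization
    (himage : ∀ F ∈ (indepComplex G).faces, F.image μ ∈ X.faces)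
    {h : W → ℝ} (hh : h ∈ (indepComplex G).realization) : pushforward μ h ∈ X.realization := by
  obtain ⟨h0, h1, F, hF, hsupp⟩ := hh
  refine ⟨pushforward_nonneg h0, by rw [sum_pushforward, h1], _, himage F hF, fun v hv => ?_⟩
  obtain ⟨w, rfl, hw⟩ := exists_ne_zero_of_pushforward_ne_zero hv
  exact mem_image_of_mem μ (hsupp w hw)

/-- Away from `h`, the positive support of a point of the segment is the preimage of that of
`pushforward μ h`, a face of `X`, so `hisol` provides a copy surviving the cancellation. -/
theorem segment_subset_resolvable
    (himage : ∀ F ∈ (indepComplex G).faces, F.image μ ∈ X.faces)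
    (hisol : ∀ S ∈ X.faces, S.Nonempty → ∃ w, μ w ∈ S ∧ ∀ w', μ w' ∈ S → ¬G.Adj w w')
    {h : W → ℝ} (hh : h ∈ (indepComplex G).realization) :
    segment ℝ (pushforward μ h ∘ μ) h ⊆ resolvable G := by
  have hp := pushforward_mem_realization himage hh
  rintro _ ⟨a, b, ha, hb, hab, rfl⟩
  rcases ha.eq_or_lt with rfl | ha
  · rw [zero_add] at hab
    simpa [hab] using mem_resolvable_of_mem_realization hh
  have hg : ∀ w, 0 ≤ (a • (pushforward μ h ∘ μ) + b • h) w := fun w =>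
    add_nonneg (mul_nonneg ha.le (hp.1 _)) (mul_nonneg hb (hh.1 w))
  refine ⟨hg, sum_cancelConflicts_pos hisol hg (filter_pos_mem_faces hp)
    (filter_pos_nonempty hp) fun w => ?_⟩
  simp only [mem_filter, mem_univ, true_and, Pi.add_apply, Pi.smul_apply, Function.comp_apply,
    smul_eq_mul]
  constructor
  · intro hpos
    by_contra hw
    have hμw : pushforward μ h (μ w) = 0 := le_antisymm (not_lt.1 hw) (hp.1 _)
    have hhw : h w = 0 := le_antisymm (hμw ▸ le_pushforward hh.1 w) (hh.1 w)
    simp [hμw, hhw] at hpos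
  · intro hpos
    exact add_pos_of_pos_of_nonneg (mul_pos ha hpos) (mul_nonneg hb (hh.1 w))

def pushforwardMap (himage : ∀ F ∈ (indepComplex G).faces, F.image μ ∈ X.faces) :
    C((indepComplex G).realization, X.realization) where
  toFun h := ⟨pushforward μ h, pushforward_mem_realization himage h.2⟩
  continuous_toFun := (continuous_pushforward.comp continuous_subtype_val).subtype_mk _

def homotopyEquivIndepComplex
    (himage : ∀ F ∈ (indepComplex G).faces, F.image μ ∈ X.faces)
    (hisol : ∀ S ∈ X.faces, S.Nonempty → ∃ w, μ w ∈ S ∧ ∀ w', μ w' ∈ S → ¬G.Adj w w') :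
    ContinuousMap.HomotopyEquiv X.realization (indepComplex G).realization where
  toFun := resolveConflictsMap.comp (pullbackMap hisol)
  invFun := pushforwardMap himage
  left_inv := by
    refine ContinuousMap.homotopic_of_segment_subset _ _ fun f => ?_
    obtain ⟨h0, -, F, hF, hsupp⟩ := f.2
    exact segment_subset_realization (Subtype.prop _) f.2 hF
      (fun v hv => hsupp v (pushforward_resolveConflicts_ne_zero h0 hv)) hsupp
  right_inv := by
    let incl : C((indepComplex G).realization, resolvable G) :=
      ⟨fun h => ⟨h, mem_resolvable_of_mem_realization h.2⟩, continuous_subtype_val.subtype_mk _⟩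
    have hseg : ((pullbackMap hisol).comp (pushforwardMap himage)).Homotopic incl :=
      ContinuousMap.homotopic_of_segment_subset _ _ fun h =>
        segment_subset_resolvable himage hisol h.2
    have hid : resolveConflictsMap.comp incl = ContinuousMap.id _ :=
      ContinuousMap.ext fun h => Subtype.ext (resolveConflicts_eq_self h.2)
    exact hid ▸ (ContinuousMap.Homotopic.refl resolveConflictsMap).comp hseg

theorem hEquiv_indepComplex
    (himage : ∀ F ∈ (indepComplex G).faces, F.image μ ∈ X.faces)
    (hisol : ∀ S ∈ X.faces, S.Nonempty → ∃ w, μ w ∈ S ∧ ∀ w', μ w' ∈ S → ¬G.Adj w w') :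
    X.HEquiv (indepComplex G) :=
  ⟨homotopyEquivIndepComplex himage hisol⟩

end Collapse

end SComplex

section Layered

variable {n : ℕ} {A : Fin (n + 1) → Type*}

theorem exists_zero_of_forall_exists_castSucc {P : ∀ j, A j → Prop}
    (hback : ∀ (i : Fin n) y, P i.succ y → ∃ x, P i.castSucc x) {j : Fin (n + 1)} {x : A j}
    (hx : P j x) : ∃ x₀, P 0 x₀ := by
  induction j using Fin.induction with
  | zero => exact ⟨x, hx⟩
  | succ i ih =>
    obtain ⟨x', hx'⟩ := hback i x hx
    exact ih hx'

theorem exists_path_of_forall_exists_succ {E : ∀ i : Fin n, A i.castSucc → A i.succ → Prop}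
    {P : ∀ j, A j → Prop} {x₀ : A 0} (h₀ : P 0 x₀)
    (hstep : ∀ i x, P i.castSucc x → ∃ y, E i x y ∧ P i.succ y) :
    ∃ a : ∀ j, A j, (∀ i, E i (a i.castSucc) (a i.succ)) ∧ ∀ j, P j (a j) := by
  choose next hnextE hnextP using hstep
  let b : ∀ j, {x : A j // P j x} :=
    Fin.induction ⟨x₀, h₀⟩ fun i x => ⟨next i x.1 x.2, hnextP i x.1 x.2⟩
  refine ⟨fun j => (b j).1, fun i => ?_, fun j => (b j).2⟩
  simp only [b, Fin.induction_succ]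
  exact hnextE _ _ _

def blockVertex : (Σ i : Fin n, A i.castSucc ⊕ A i.succ) → Σ j, A j
  | ⟨i, .inl a⟩ => ⟨i.castSucc, a⟩
  | ⟨i, .inr b⟩ => ⟨i.succ, b⟩

variable (E : ∀ i : Fin n, A i.castSucc → A i.succ → Prop)

def blockGraph : SimpleGraph (Σ i : Fin n, A i.castSucc ⊕ A i.succ) :=
  SimpleGraph.fromRel fun w w' => ∃ i a b, E i a b ∧ w = ⟨i, .inl a⟩ ∧ w' = ⟨i, .inr b⟩

variable {E}

theorem blockGraph_adj_inl {i : Fin n} {a : A i.castSucc}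
    {w : Σ i : Fin n, A i.castSucc ⊕ A i.succ} :
    (blockGraph E).Adj ⟨i, .inl a⟩ w ↔ ∃ b, E i a b ∧ w = ⟨i, .inr b⟩ := by
  simp only [blockGraph, SimpleGraph.fromRel_adj]
  constructor
  · rintro ⟨-, ⟨i, a, b, hE, ⟨⟩, rfl⟩ | ⟨i, a, b, -, -, ⟨⟩⟩⟩
    exact ⟨b, hE, rfl⟩
  · rintro ⟨b, hE, rfl⟩
    exact ⟨by simp, Or.inl ⟨i, a, b, hE, rfl, rfl⟩⟩

theorem blockGraph_adj_inr {i : Fin n} {b : A i.succ}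
    {w : Σ i : Fin n, A i.castSucc ⊕ A i.succ} :
    (blockGraph E).Adj ⟨i, .inr b⟩ w ↔ ∃ a, E i a b ∧ w = ⟨i, .inl a⟩ := by
  simp only [blockGraph, SimpleGraph.fromRel_adj]
  constructor
  · rintro ⟨-, ⟨i, a, b, -, ⟨⟩, -⟩ | ⟨i, a, b, hE, rfl, ⟨⟩⟩⟩
    exact ⟨a, hE, rfl⟩
  · rintro ⟨a, hE, rfl⟩
    exact ⟨by simp, Or.inr ⟨i, a, b, hE, rfl, rfl⟩⟩

theorem bigJoin_bipIndep_eq_indepComplex :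
    SComplex.bigJoin (fun i => bipIndep (E i)) = SComplex.indepComplex (blockGraph E) := by
  ext F
  constructor
  · rintro hF w hw w' hw' - ⟨-, ⟨i, a, b, hE, rfl, rfl⟩ | ⟨i, a, b, hE, rfl, rfl⟩⟩
    · exact hF i a b (mem_preimage.2 hw) (mem_preimage.2 hw') hE
    · exact hF i a b (mem_preimage.2 hw') (mem_preimage.2 hw) hE
  · intro hF i a b ha hb hE
    exact hF (mem_preimage.1 ha) (mem_preimage.1 hb) (by simp)
      (blockGraph_adj_inl.2 ⟨b, hE, rfl⟩)

theorem image_blockVertex_mem_faces [DecidableEq (Σ j, A j)]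
    {F : Finset (Σ i : Fin n, A i.castSucc ⊕ A i.succ)}
    (hF : F ∈ (SComplex.indepComplex (blockGraph E)).faces) :
    F.image blockVertex ∈ (pathComplex n A E).faces := by
  rintro ⟨a, hE, ha⟩
  have hcopy : ∀ j, (∃ i : Fin n, i.castSucc = j ∧ ⟨i, .inl (a i.castSucc)⟩ ∈ F) ∨
      ∃ i : Fin n, i.succ = j ∧ ⟨i, .inr (a i.succ)⟩ ∈ F := fun j => by
    obtain ⟨⟨i, x | y⟩, hw, hμ⟩ := mem_image.1 (ha j)
    · obtain ⟨rfl, rfl⟩ := (Sigma.mk_eq_mk_apply_iff a x).1 hμ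
      exact Or.inl ⟨i, rfl, hw⟩
    · obtain ⟨rfl, rfl⟩ := (Sigma.mk_eq_mk_apply_iff a y).1 hμ
      exact Or.inr ⟨i, rfl, hw⟩
  -- the other copy of `a i.succ`, in block `i`, conflicts with the copy of `a i.castSucc` there
  have hinl : ∀ j, ∃ i : Fin n, i.castSucc = j ∧ ⟨i, .inl (a i.castSucc)⟩ ∈ F := by
    intro j
    induction j using Fin.induction with
    | zero =>
      rcases hcopy 0 with h | ⟨i, hi, -⟩
      · exact h
      · exact absurd hi (Fin.succ_ne_zero i)
    | succ i ih =>
      obtain ⟨i', hi', hmem⟩ := ih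
      obtain rfl : i = i' := (Fin.castSucc_injective _ hi').symm
      rcases hcopy i.succ with h | ⟨i'', hi'', hmem'⟩
      · exact h
      · obtain rfl : i = i'' := (Fin.succ_injective _ hi'').symm
        exact absurd (blockGraph_adj_inl.2 ⟨_, hE i, rfl⟩) (hF hmem hmem' (by simp))
  obtain ⟨i, hi, -⟩ := hinl (Fin.last n)
  exact (Fin.castSucc_lt_last i).ne hi

theorem exists_blockVertex_mem_forall_not_adj {S : Finset (Σ j, A j)}
    (hS : S ∈ (pathComplex n A E).faces) (hne : S.Nonempty) :
    ∃ w, blockVertex w ∈ S ∧ ∀ w', blockVertex w' ∈ S → ¬(blockGraph E).Adj w w' := by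
  by_contra! hall
  have hfwd : ∀ i x, ⟨i.castSucc, x⟩ ∈ S → ∃ y, E i x y ∧ ⟨i.succ, y⟩ ∈ S := by
    intro i x hx
    obtain ⟨w, hw, hadj⟩ := hall ⟨i, .inl x⟩ hx
    obtain ⟨y, hE, rfl⟩ := blockGraph_adj_inl.1 hadj
    exact ⟨y, hE, hw⟩
  have hbwd : ∀ (i : Fin n) (y : A i.succ), ⟨i.succ, y⟩ ∈ S → ∃ x, ⟨i.castSucc, x⟩ ∈ S := by
    intro i y hy
    obtain ⟨w, hw, hadj⟩ := hall ⟨i, .inr y⟩ hy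
    obtain ⟨x, -, rfl⟩ := blockGraph_adj_inr.1 hadj
    exact ⟨x, hw⟩
  obtain ⟨⟨j, x⟩, hx⟩ := hne
  obtain ⟨x₀, hx₀⟩ := exists_zero_of_forall_exists_castSucc (P := fun j x => ⟨j, x⟩ ∈ S) hbwd hx
  exact hS (exists_path_of_forall_exists_succ (P := fun j x => ⟨j, x⟩ ∈ S) hx₀ hfwd)

end Layered

/-- Let `G` be a layered graph on `A₀ ∪ A₁ ∪ ⋯ ∪ Aₙ`, each
edge joining `A_{i-1}` to `A_i`; let `Xᵢ` be the independence complex of the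
bipartite graph between `A_{i-1}` and `Aᵢ`, and let `X` be the complex whose
Stanley–Reisner ideal is generated by the full edge paths.  Then `X` is
homotopy equivalent to the join `X₁ * X₂ * ⋯ * Xₙ`. -/
theorem statement_5 (n : ℕ) (A : Fin (n + 1) → Type u) [∀ i, Fintype (A i)]
    (E : ∀ i : Fin n, A i.castSucc → A i.succ → Prop) :
    SComplex.HEquiv (pathComplex n A E)
      (SComplex.bigJoin fun i : Fin n => bipIndep (E i)) := by
  rw [bigJoin_bipIndep_eq_indepComplex]
  exact SComplex.hEquiv_indepComplex (fun F hF => image_blockVertex_mem_faces hF)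
    (fun S hS hne => exists_blockVertex_mem_forall_not_adj hS hne)
end
end

section
/- Let R ⊆ [2] × P with parts R_1, R_2, and let Y_1(R), Y_2(R) be as defined. If max(R_1) ≠ min(R_2), then H̃^p(Y_j(R); k) = 0 for both j = 1, 2 and all p ≤ |max(R_1) ∩ min(R_2)| − 2. If max(R_1) = min(R_2), then H̃^p(Y_j(R); k) ≅ k for p = |max(R_1)| − 2 and H̃^p(Y_j(R); k) = 0 for all p ≠ |max(R_1)| − 2. -/
/-!
Common infrastructure: abstract simplicial complexes, geometric realization,
homotopy equivalence, reduced simplicial cohomology, squarefree monomial ideals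
(encoded as upward closed families of finite sets), Koszul-complex multigraded
Betti numbers, and letterplace ideals of posets.
-/

noncomputable section

open Finset

attribute [local instance] Classical.propDecidable

universe u v w

/-- `A` is a maximal antichain of the poset `P`. -/
def IsMaxFinsetAntichain {P : Type u} [PartialOrder P] (A : Finset P) : Prop :=
  IsAntichain (· ≤ ·) (A : Set P) ∧
    ∀ B : Finset P, IsAntichain (· ≤ ·) (B : Set P) → A ⊆ B → A = B

/-!
Both complexes are handled by cone operators. If adding a vertex `v₀` to any `p`-dimensional
face not containing it yields a face, then `f ↦ ±f(v₀ ∪ ·)` is a cochain homotopy on the cocycles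
of degree `p`, so `H̃^p = 0`. When `max R₁ ≠ min R₂` such an apex exists for
`p ≤ |max R₁ ∩ min R₂| - 2`. For `Y₂`, if `min R₂ ⊄ max R₁` take `b₀ ∈ min R₂ \ max R₁`: a cone
face has at most `|max R₁ ∩ min R₂|` elements, one of them `b₀`, so it misses some element of the
intersection, which lies below none of its elements as `min R₂` is an antichain; otherwise some
element of `max R₁ \ min R₂` lies below no element of `min R₂`, and `Y₂` is a full simplex.
When `max R₁ = min R₂ = A`, both complexes are the boundary of the simplex on the antichain `A`.
The cone argument kills every degree but `|A| - 2`, where the coboundaries are the kernel of the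
nonzero functional `f ↦ (δf)(A)`, hence of codimension one. `Y₁` is `Y₂` for the dual order.
-/

theorem neg_one_pow_mul_self {R : Type*} [Ring R] (n : ℕ) : (-1 : R) ^ n * (-1) ^ n = 1 := by
  rw [← pow_add]
  exact Even.neg_one_pow ⟨n, rfl⟩

theorem neg_one_pow_eq_neg_of_odd_add {R : Type*} [Ring R] {m n : ℕ} (h : Odd (m + n)) :
    (-1 : R) ^ m = -(-1) ^ n := by
  have hmn := Nat.odd_iff.1 h
  rw [neg_one_pow_eq_pow_mod_two, neg_one_pow_eq_pow_mod_two (n := n)]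
  rcases Nat.mod_two_eq_zero_or_one n with hn | hn
  · rw [hn, show m % 2 = 1 by omega]; simp
  · rw [hn, show m % 2 = 0 by omega]; simp

section vpos

variable {V : Type u}

theorem vpos_erase (S : Finset V) (x y : V) :
    vpos S x = vpos (S.erase y) x + if y ∈ S ∧ WellOrderingRel y x then 1 else 0 := by
  unfold vpos
  rw [filter_erase]
  split_ifs with h
  · exact (card_erase_add_one (mem_filter.2 h)).symm
  · rw [erase_eq_of_notMem (fun hy => h (mem_filter.1 hy)), add_zero]

theorem vpos_erase_self (S : Finset V) (x : V) : vpos (S.erase x) x = vpos S x := by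
  simp [vpos_erase S x x, irrefl]

theorem vpos_insert_self (S : Finset V) (x : V) : vpos (insert x S) x = vpos S x := by
  rw [← vpos_erase_self, erase_insert_eq_erase, vpos_erase_self]

theorem vpos_add_vpos {S : Finset V} {a b : V} (ha : a ∈ S) (hb : b ∈ S) (hab : a ≠ b) :
    vpos S a + vpos S b = vpos (S.erase b) a + vpos (S.erase a) b + 1 := by
  rw [vpos_erase S a b, vpos_erase S b a]
  rcases trichotomous_of WellOrderingRel a b with h | rfl | h
  · simp [ha, hb, h, asymm h]
    omega
  · exact absurd rfl hab
  · simp [ha, hb, h, asymm h]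
    omega

end vpos

namespace SComplex

variable {V : Type u} {k : Type w} [Field k] {X : SComplex V}

theorem ext_faces {Y : SComplex V} (h : X.faces = Y.faces) : X = Y := by
  cases X
  cases Y
  congr

theorem evalC_of_mem {i : ℤ} (f : cochain k X i) {S : Finset V}
    (h : S ∈ X.faces ∧ (#S : ℤ) = i + 1) : evalC k f S = f ⟨S, h⟩ :=
  dif_pos h

theorem evalC_of_notMem {i : ℤ} (f : cochain k X i) {S : Finset V}
    (h : ¬ (S ∈ X.faces ∧ (#S : ℤ) = i + 1)) : evalC k f S = 0 :=
  dif_neg h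

theorem cochain_ext {i : ℤ} {f g : cochain k X i} (h : ∀ S, evalC k f S = evalC k g S) :
    f = g :=
  funext fun F => by rw [← evalC_of_mem f F.2, ← evalC_of_mem g F.2, h]

variable (k) in
/-- The coboundary formula `(δf)(S)`, evaluated at any finite set `S`, face or not. -/
def coboundaryAt {i : ℤ} (S : Finset V) : cochain k X i →ₗ[k] k where
  toFun f := ∑ v ∈ S, (-1 : k) ^ vpos S v * evalC k f (S.erase v)
  map_add' f g := by simp only [evalC_add, mul_add, sum_add_distrib]
  map_smul' s f := by
    simp only [evalC_smul, mul_left_comm, ← mul_sum, RingHom.id_apply, smul_eq_mul]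

theorem coboundary_apply {i : ℤ} (f : cochain k X i) (F : Face X (i + 1)) :
    coboundary k X i f F = coboundaryAt k F.1 f :=
  rfl

theorem evalC_coboundary {i : ℤ} (f : cochain k X i) {S : Finset V} (hS : S ∈ X.faces)
    (hcard : (#S : ℤ) = i + 2) : evalC k (coboundary k X i f) S = coboundaryAt k S f := by
  rw [evalC_of_mem _ ⟨hS, by omega⟩, coboundary_apply]

theorem coboundaryAt_coboundary {i : ℤ} (g : cochain k X i) {S : Finset V}
    (hS : ∀ v ∈ S, S.erase v ∈ X.faces) (hcard : (#S : ℤ) = i + 3) :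
    coboundaryAt k S (coboundary k X i g) = 0 := by
  let T : V × V → k := fun q =>
    (-1 : k) ^ (vpos S q.1 + vpos (S.erase q.1) q.2) * evalC k g ((S.erase q.1).erase q.2)
  have hexpand :
      coboundaryAt k S (coboundary k X i g) = ∑ v ∈ S, ∑ w ∈ S.erase v, T (v, w) := by
    refine sum_congr rfl fun v hv => ?_
    have hcard' : (#(S.erase v) : ℤ) = i + 2 := by
      rw [card_erase_of_mem hv, Nat.cast_sub (card_pos.2 ⟨v, hv⟩)]; omega
    rw [evalC_coboundary g (hS v hv) hcard', coboundaryAt, LinearMap.coe_mk, AddHom.coe_mk,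
      mul_sum]
    exact sum_congr rfl fun w _ => by simp only [T, pow_add, mul_assoc]
  rw [hexpand, ← sum_finset_product' S.offDiag S (fun v => S.erase v)
    fun q => by rw [mem_offDiag, mem_erase]; tauto]
  refine sum_involution (fun q _ => q.swap) (fun q hq => ?_) (fun q hq _ => ?_)
    (fun q hq => by
      obtain ⟨hv, hw, hvw⟩ := mem_offDiag.1 hq
      exact mem_offDiag.2 ⟨hw, hv, hvw.symm⟩)
    (fun q _ => rfl)
  · obtain ⟨hv, hw, hvw⟩ := mem_offDiag.1 hq
    have hpos := vpos_add_vpos hv hw hvw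
    have hodd : Odd ((vpos S q.1 + vpos (S.erase q.1) q.2) +
        (vpos S q.2 + vpos (S.erase q.2) q.1)) :=
      Nat.odd_iff.2 (by omega)
    simp only [T, Prod.fst_swap, Prod.snd_swap, neg_one_pow_eq_neg_of_odd_add hodd,
      erase_right_comm (s := S) (a := q.2)]
    ring
  · obtain ⟨-, -, hvw⟩ := mem_offDiag.1 hq
    exact fun h => hvw (congrArg Prod.fst h).symm

variable (k X) in
def castCochain {i j : ℤ} (h : i = j) : cochain k X i ≃ₗ[k] cochain k X j :=
  h ▸ LinearEquiv.refl k _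

theorem evalC_castCochain {i j : ℤ} (h : i = j) (f : cochain k X i) (S : Finset V) :
    evalC k (castCochain k X h f) S = evalC k f S := by
  subst h; rfl

theorem coboundaryAt_castCochain {i j : ℤ} (h : i = j) (f : cochain k X i) (S : Finset V) :
    coboundaryAt k S (castCochain k X h f) = coboundaryAt k S f := by
  subst h; rfl

variable (k X) in
/-- The image of `δ : C^{p-1} → C^{p-1+1}`, transported along `p - 1 + 1 = p`. -/
def coboundaries (p : ℤ) : Submodule k (cochain k X p) :=
  (LinearMap.range (coboundary k X (p - 1))).map
    (castCochain k X (sub_add_cancel p 1)).toLinearMap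

theorem mem_coboundaries {p : ℤ} {f : cochain k X p} (g : cochain k X (p - 1))
    (hg : ∀ S, evalC k (coboundary k X (p - 1) g) S = evalC k f S) : f ∈ coboundaries k X p :=
  ⟨_, ⟨g, rfl⟩, cochain_ext fun S => by rw [LinearEquiv.coe_coe, evalC_castCochain, hg]⟩

theorem redCohomDim_eq_finrank_sub (p : ℤ) :
    redCohomDim k X p = Module.finrank k (LinearMap.ker (coboundary k X p)) -
      Module.finrank k (coboundaries k X p) := by
  rw [coboundaries, LinearEquiv.finrank_map_eq]
  rfl

theorem redCohomDim_eq_zero_of_isEmpty (p : ℤ) [IsEmpty (Face X p)] :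
    redCohomDim k X p = 0 := by
  rw [redCohomDim_eq_finrank_sub, Submodule.finrank_eq_zero.2 (Subsingleton.elim _ _), zero_tsub]

theorem coboundary_eq_zero_of_isEmpty (p : ℤ) [IsEmpty (Face X (p + 1))] :
    coboundary k X p = 0 :=
  LinearMap.ext fun _ => Subsingleton.elim _ _

/-- The cone operator with apex `v₀`; it is a cochain homotopy wherever the cone over a face
is again a face. -/
def coneCochain {p : ℤ} (v₀ : V) (f : cochain k X p) : cochain k X (p - 1) := fun F =>
  if v₀ ∈ F.1 then 0 else (-1) ^ vpos F.1 v₀ * evalC k f (insert v₀ F.1)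

theorem evalC_coneCochain_erase {p : ℤ} (v₀ : V) (f : cochain k X p) {S : Finset V}
    (hS : S ∈ X.faces) (hcard : (#S : ℤ) = p + 1) {v : V} (hv : v ∈ S) :
    evalC k (coneCochain v₀ f) (S.erase v) = if v₀ ∈ S.erase v then 0
      else (-1) ^ vpos (S.erase v) v₀ * evalC k f (insert v₀ (S.erase v)) := by
  refine evalC_of_mem _ ⟨X.down_closed hS (erase_subset v S), ?_⟩
  rw [card_erase_of_mem hv, Nat.cast_sub (card_pos.2 ⟨v, hv⟩)]
  omega

theorem evalC_coboundary_coneCochain {p : ℤ} (v₀ : V) (f : cochain k X p)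
    (hf : ∀ S ∈ X.faces, (#S : ℤ) = p + 1 → v₀ ∉ S → coboundaryAt k (insert v₀ S) f = 0)
    (S : Finset V) :
    evalC k (coboundary k X (p - 1) (coneCochain v₀ f)) S = evalC k f S := by
  by_cases hS : S ∈ X.faces ∧ (#S : ℤ) = p + 1
  swap
  · rw [evalC_of_notMem _ hS, evalC_of_notMem]
    exact fun h => hS ⟨h.1, by omega⟩
  obtain ⟨hS, hcard⟩ := hS
  rw [evalC_coboundary _ hS (by omega), coboundaryAt, LinearMap.coe_mk, AddHom.coe_mk]
  by_cases hv₀ : v₀ ∈ S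
  · rw [sum_eq_single_of_mem v₀ hv₀ fun v hv hne => ?_]
    · rw [evalC_coneCochain_erase v₀ f hS hcard hv₀, if_neg (notMem_erase v₀ S),
        vpos_erase_self, insert_erase hv₀, ← mul_assoc, neg_one_pow_mul_self, one_mul]
    · rw [evalC_coneCochain_erase v₀ f hS hcard hv, if_pos (mem_erase.2 ⟨Ne.symm hne, hv₀⟩),
        mul_zero]
  · have hcocycle := hf S hS hcard hv₀
    rw [coboundaryAt, LinearMap.coe_mk, AddHom.coe_mk, sum_insert hv₀, erase_insert hv₀,
      vpos_insert_self] at hcocycle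
    have hterm : ∀ v ∈ S, (-1 : k) ^ vpos S v * evalC k (coneCochain v₀ f) (S.erase v) =
        -(-1) ^ vpos S v₀ *
          ((-1) ^ vpos (insert v₀ S) v * evalC k f ((insert v₀ S).erase v)) := by
      intro v hv
      have hne : v ≠ v₀ := fun h => hv₀ (h ▸ hv)
      have hpos := vpos_add_vpos (mem_insert_of_mem hv) (mem_insert_self v₀ S) hne
      rw [erase_insert hv₀, erase_insert_of_ne hne.symm, vpos_insert_self,
        vpos_insert_self] at hpos
      have hodd : Odd ((vpos S v + vpos (S.erase v) v₀) + (vpos S v₀ + vpos (insert v₀ S) v)) :=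
        Nat.odd_iff.2 (by omega)
      rw [evalC_coneCochain_erase v₀ f hS hcard hv,
        if_neg fun h => hv₀ (mem_of_mem_erase h), erase_insert_of_ne hne.symm, ← mul_assoc,
        ← pow_add, neg_one_pow_eq_neg_of_odd_add hodd, pow_add]
      ring
    rw [sum_congr rfl hterm, ← mul_sum]
    linear_combination (-(-1 : k) ^ vpos S v₀) * hcocycle +
      evalC k f S * neg_one_pow_mul_self (R := k) (vpos S v₀)

theorem coboundaries_le_of_cone {p : ℤ} (v₀ : V) (W : Submodule k (cochain k X p))
    (hW : ∀ f ∈ W, ∀ S ∈ X.faces, (#S : ℤ) = p + 1 → v₀ ∉ S →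
      coboundaryAt k (insert v₀ S) f = 0) :
    W ≤ coboundaries k X p :=
  fun f hf => mem_coboundaries _ (evalC_coboundary_coneCochain v₀ f (hW f hf))

theorem redCohomDim_eq_zero_of_insert_mem [Fintype V] {p : ℤ} (v₀ : V)
    (h : ∀ S ∈ X.faces, (#S : ℤ) = p + 1 → v₀ ∉ S → insert v₀ S ∈ X.faces) :
    redCohomDim k X p = 0 := by
  have hle : LinearMap.ker (coboundary k X p) ≤ coboundaries k X p := by
    refine coboundaries_le_of_cone v₀ _ fun f hf S hS hcard hv₀ => ?_
    have hcard' : (#(insert v₀ S) : ℤ) = p + 1 + 1 := by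
      rw [card_insert_of_notMem hv₀]; push_cast; omega
    rw [← coboundary_apply f ⟨_, h S hS hcard hv₀, hcard'⟩, LinearMap.mem_ker.1 hf,
      Pi.zero_apply]
  rw [redCohomDim_eq_finrank_sub, Nat.sub_eq_zero_of_le (Submodule.finrank_mono hle)]

def simplexBoundary (A : Finset V) : SComplex V where
  faces := {F | F ⊂ A}
  down_closed hF hGF := lt_of_le_of_lt hGF hF

theorem redCohomDim_simplexBoundary_of_ne [Fintype V] (A : Finset V) {p : ℤ}
    (hp : p ≠ #A - 2) : redCohomDim k (simplexBoundary A) p = 0 := by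
  rcases lt_or_gt_of_ne hp with hp | hp
  · by_cases hp' : p ≤ -2
    · have : IsEmpty (Face (simplexBoundary A) p) := ⟨fun F => by have := F.2.2; omega⟩
      exact redCohomDim_eq_zero_of_isEmpty p
    obtain ⟨v₀, hv₀⟩ : A.Nonempty := card_pos.1 (by omega)
    refine redCohomDim_eq_zero_of_insert_mem v₀ fun S hS hcard hv₀S => ?_
    refine Finset.ssubset_iff_subset_ne.2 ⟨insert_subset hv₀ hS.subset, fun h => ?_⟩
    have := congrArg card h
    rw [card_insert_of_notMem hv₀S] at this
    omega
  · have : IsEmpty (Face (simplexBoundary A) p) :=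
      ⟨fun F => by have := card_lt_card F.2.1; have := F.2.2; omega⟩
    exact redCohomDim_eq_zero_of_isEmpty p

theorem coboundaryAt_ne_zero_simplexBoundary {A : Finset V} {p : ℤ} (hp : p = #A - 2)
    (hA : A.Nonempty) : (coboundaryAt k A : cochain k (simplexBoundary A) p →ₗ[k] k) ≠ 0 := by
  obtain ⟨v₁, hv₁⟩ := hA
  have hface : ∀ v ∈ A, A.erase v ∈ (simplexBoundary A).faces ∧ (#(A.erase v) : ℤ) = p + 1 :=
    fun v hv => ⟨erase_ssubset hv, by
      rw [card_erase_of_mem hv, Nat.cast_sub (card_pos.2 ⟨v, hv⟩)]; omega⟩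
  let f₀ : cochain k (simplexBoundary A) p := fun F => if F.1 = A.erase v₁ then 1 else 0
  have hf₀ : coboundaryAt k A f₀ = (-1) ^ vpos A v₁ := by
    rw [coboundaryAt, LinearMap.coe_mk, AddHom.coe_mk,
      sum_eq_single_of_mem v₁ hv₁ fun v hv hne => ?_]
    · simp only [evalC_of_mem f₀ (hface v₁ hv₁), f₀, if_pos, mul_one]
    · simp only [evalC_of_mem f₀ (hface v hv), f₀, if_neg fun h => hne (erase_injOn A hv hv₁ h),
        mul_zero]
  exact fun h => pow_ne_zero _ (neg_ne_zero.2 one_ne_zero)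
    (hf₀.symm.trans (LinearMap.congr_fun h f₀))

theorem redCohomDim_simplexBoundary [Fintype V] {A : Finset V} (hA : A.Nonempty) :
    redCohomDim k (simplexBoundary A) (#A - 2) = 1 := by
  set p : ℤ := #A - 2 with hp
  have : IsEmpty (Face (simplexBoundary A) (p + 1)) :=
    ⟨fun F => by have := card_lt_card F.2.1; have := F.2.2; omega⟩
  let φ : Module.Dual k (cochain k (simplexBoundary A) p) := coboundaryAt k A
  have hφ : φ ≠ 0 := coboundaryAt_ne_zero_simplexBoundary hp hA
  obtain ⟨v₁, hv₁⟩ := hA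
  have hcob : coboundaries k (simplexBoundary A) p = LinearMap.ker φ := by
    refine le_antisymm ?_ (coboundaries_le_of_cone v₁ _ fun f hf S hS hcard hv₁S => ?_)
    · rintro _ ⟨_, ⟨g, rfl⟩, rfl⟩
      rw [LinearMap.mem_ker, LinearEquiv.coe_coe, coboundaryAt_castCochain]
      exact coboundaryAt_coboundary g (fun v hv => erase_ssubset hv) (by omega)
    · have hSA : insert v₁ S = A := by
        refine eq_of_subset_of_card_le (insert_subset hv₁ hS.subset) ?_
        rw [card_insert_of_notMem hv₁S]
        omega
      rw [hSA]
      exact hf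
  rw [redCohomDim_eq_finrank_sub, coboundary_eq_zero_of_isEmpty, LinearMap.ker_zero, finrank_top,
    hcob, ← φ.finrank_ker_add_one_of_ne_zero hφ, Nat.add_sub_cancel_left]

end SComplex

theorem mem_part_of_mem {n : ℕ} {P : Type u} {R : Finset (Fin n × P)} {i : Fin n} {q : P}
    (h : (i, q) ∈ R) : q ∈ part R i :=
  mem_image.2 ⟨(i, q), mem_filter.2 ⟨h, rfl⟩, rfl⟩

section Poset

variable {P : Type u} [PartialOrder P]

theorem isAntichain_maxSet (A : Finset P) : IsAntichain (· ≤ ·) (maxSet A : Set P) :=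
  fun _ ha _ hb hne hab => hne ((mem_filter.1 ha).2 _ (mem_filter.1 hb).1 hab)

theorem isAntichain_minSet (A : Finset P) : IsAntichain (· ≤ ·) (minSet A : Set P) :=
  (isAntichain_maxSet (P := Pᵒᵈ) A).to_dual

theorem maxSet_nonempty {A : Finset P} (hA : A.Nonempty) : (maxSet A).Nonempty := by
  obtain ⟨m, hm, hmax⟩ := A.exists_maximal hA
  exact ⟨m, mem_filter.2 ⟨hm, fun b hb hle => le_antisymm hle (hmax hb hle)⟩⟩

theorem minSet_nonempty {A : Finset P} (hA : A.Nonempty) : (minSet A).Nonempty :=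
  maxSet_nonempty (P := Pᵒᵈ) hA

theorem Y1Complex_eq_Y2Complex_toDual (A B : Finset P) :
    Y1Complex A B = (Y2Complex (P := Pᵒᵈ) B A : SComplex P) :=
  rfl

theorem Y2Complex_self {A : Finset P} (hA : IsAntichain (· ≤ ·) (A : Set P)) :
    Y2Complex A A = SComplex.simplexBoundary A := by
  refine SComplex.ext_faces (Set.ext fun F => ⟨?_, fun hF => ?_⟩)
  · rintro ⟨hFA, a, ha, haF⟩
    exact ssubset_iff_subset_ne.2 ⟨hFA, by rintro rfl; exact haF a ha le_rfl⟩
  · obtain ⟨a, ha, haF⟩ := exists_of_ssubset hF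
    exact ⟨fun x hx => hF.1 hx, a, ha, fun b hb hab => haF (hA.eq ha (hF.1 hb) hab ▸ hb)⟩

theorem Y1Complex_self {A : Finset P} (hA : IsAntichain (· ≤ ·) (A : Set P)) :
    Y1Complex A A = SComplex.simplexBoundary A :=
  Y2Complex_self (P := Pᵒᵈ) hA.to_dual

variable {k : Type w} [Field k]

theorem redCohomDim_Y2Complex_eq_zero [Fintype P] {A B : Finset P}
    (hA : IsAntichain (· ≤ ·) (A : Set P)) (hB : IsAntichain (· ≤ ·) (B : Set P)) (hAB : A ≠ B)
    {p : ℤ} (hp : p ≤ #(A ∩ B) - 2) : SComplex.redCohomDim k (Y2Complex A B) p = 0 := by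
  by_cases hp' : p ≤ -2
  · have : IsEmpty (SComplex.Face (Y2Complex A B) p) := ⟨fun F => by have := F.2.2; omega⟩
    exact SComplex.redCohomDim_eq_zero_of_isEmpty p
  by_cases hBA : B ⊆ A
  · obtain ⟨a, haA, haB⟩ := not_subset.1 fun h => hAB (h.antisymm hBA)
    obtain ⟨v₀, hv₀⟩ : (A ∩ B).Nonempty := card_pos.1 (by omega)
    refine SComplex.redCohomDim_eq_zero_of_insert_mem v₀ fun S hS _ _ => ?_
    have hsub : ∀ x ∈ insert v₀ S, x ∈ B :=
      fun x hx => (mem_insert.1 hx).elim (· ▸ (mem_inter.1 hv₀).2) (hS.1 x)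
    exact ⟨hsub, a, haA, fun b hb hab => haB (hA.eq haA (hBA (hsub b hb)) hab ▸ hsub b hb)⟩
  · obtain ⟨b₀, hb₀B, hb₀A⟩ := not_subset.1 hBA
    refine SComplex.redCohomDim_eq_zero_of_insert_mem b₀ fun S hS hcard hb₀S => ?_
    have hsub : ∀ x ∈ insert b₀ S, x ∈ B :=
      fun x hx => (mem_insert.1 hx).elim (· ▸ hb₀B) (hS.1 x)
    have hAB_S : ¬ A ∩ B ⊆ S := fun h => by have := card_le_card h; omega
    obtain ⟨a, ha, haS⟩ := not_subset.1 hAB_S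
    obtain ⟨haA, haB⟩ := mem_inter.1 ha
    have haS' : a ∉ insert b₀ S := fun h =>
      (mem_insert.1 h).elim (fun h => hb₀A (h ▸ haA)) haS
    exact ⟨hsub, a, haA, fun b hb hab => haS' (hB.eq haB (hsub b hb) hab ▸ hb)⟩

theorem redCohomDim_Y1Complex_eq_zero [Fintype P] {A B : Finset P}
    (hA : IsAntichain (· ≤ ·) (A : Set P)) (hB : IsAntichain (· ≤ ·) (B : Set P)) (hAB : A ≠ B)
    {p : ℤ} (hp : p ≤ #(A ∩ B) - 2) : SComplex.redCohomDim k (Y1Complex A B) p = 0 := by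
  rw [Y1Complex_eq_Y2Complex_toDual]
  exact redCohomDim_Y2Complex_eq_zero hB.to_dual hA.to_dual hAB.symm
    (by convert hp using 3; exact congrArg card (inter_comm B A))

end Poset

/-- Let `R ⊆ [2] × P` (nonempty) with parts `R₁, R₂`.  If
`max(R₁) ≠ min(R₂)` then `H̃^p(Yⱼ(R);k) = 0` for `j = 1,2` and all
`p ≤ |max(R₁) ∩ min(R₂)| - 2`.  If `max(R₁) = min(R₂)` then
`H̃^p(Yⱼ(R);k) ≅ k` for `p = |max(R₁)| - 2`, and `H̃^p(Yⱼ(R);k) = 0` for all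
`p ≠ |max(R₁)| - 2`. -/
theorem statement_8 {P : Type u} [PartialOrder P] [Fintype P] (k : Type w)
    [Field k] (R : Finset (Fin 2 × P)) (hR : R.Nonempty) :
    (maxSet (part R 0) ≠ minSet (part R 1) →
      ∀ p : ℤ, p ≤ ((maxSet (part R 0) ∩ minSet (part R 1)).card : ℤ) - 2 →
        SComplex.redCohomDim k
          (Y1Complex (maxSet (part R 0)) (minSet (part R 1))) p = 0 ∧
        SComplex.redCohomDim k
          (Y2Complex (maxSet (part R 0)) (minSet (part R 1))) p = 0) ∧
    (maxSet (part R 0) = minSet (part R 1) →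
      ∀ p : ℤ,
        (p = ((maxSet (part R 0)).card : ℤ) - 2 →
          SComplex.redCohomDim k
            (Y1Complex (maxSet (part R 0)) (minSet (part R 1))) p = 1 ∧
          SComplex.redCohomDim k
            (Y2Complex (maxSet (part R 0)) (minSet (part R 1))) p = 1) ∧
        (p ≠ ((maxSet (part R 0)).card : ℤ) - 2 →
          SComplex.redCohomDim k
            (Y1Complex (maxSet (part R 0)) (minSet (part R 1))) p = 0 ∧
          SComplex.redCohomDim k
            (Y2Complex (maxSet (part R 0)) (minSet (part R 1))) p = 0)) := by
  have hA := isAntichain_maxSet (part R 0)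
  have hB := isAntichain_minSet (part R 1)
  refine ⟨fun hAB p hp => ⟨redCohomDim_Y1Complex_eq_zero hA hB hAB hp,
    redCohomDim_Y2Complex_eq_zero hA hB hAB hp⟩, fun hAB p => ?_⟩
  have hne : (maxSet (part R 0)).Nonempty := by
    obtain ⟨⟨i, q⟩, hq⟩ := hR
    fin_cases i
    · exact maxSet_nonempty ⟨q, mem_part_of_mem hq⟩
    · exact hAB ▸ minSet_nonempty ⟨q, mem_part_of_mem hq⟩
  rw [← hAB, Y1Complex_self hA, Y2Complex_self hA]
  refine ⟨fun hp => ?_, fun hp => ?_⟩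
  · subst hp
    exact ⟨SComplex.redCohomDim_simplexBoundary hne, SComplex.redCohomDim_simplexBoundary hne⟩
  · exact ⟨SComplex.redCohomDim_simplexBoundary_of_ne _ hp,
      SComplex.redCohomDim_simplexBoundary_of_ne _ hp⟩

end
end

section
/- Let R ⊆ [n] × P with parts R_1, …, R_n. The multidegree R occurs in the first (n-)linear strand of the resolution of L(n,P), i.e. β_{|R|−n,R}(L(n,P)) ≠ 0, if and only if for every i = 1, …, n−1 and every pair of elements p ∈ R_i and q ∈ R_{i+1} one has p ≤ q in P. In that case β_{|R|−n,R}(L(n,P)) = 1. -/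
/-!
Common infrastructure: abstract simplicial complexes, geometric realization,
homotopy equivalence, reduced simplicial cohomology, squarefree monomial ideals
(encoded as upward closed families of finite sets), Koszul-complex multigraded
Betti numbers, and letterplace ideals of posets.
-/

noncomputable section

open Finset

attribute [local instance] Classical.propDecidable

universe u v w

/-- `A` is a maximal antichain of the poset `P`. -/
def IsMaxFinAntichain {P : Type u} [PartialOrder P] (A : Finset P) : Prop :=
  IsAntichain (· ≤ ·) (A : Set P) ∧
    ∀ B : Finset P, IsAntichain (· ≤ ·) (B : Set P) → A ⊆ B → A = B

/-!
In homological degree `|R| - n` the degree-`R` strand of the Koszul complex of `L(n,P)` has a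
basis indexed by the monotone maps `c : [n] → P` whose graph lies in `R` (through the complements
`R \ graph c`), and degree `|R| - n + 1` is zero, so the Betti number is the dimension of the
space of cycles. A cycle `f` satisfies one relation `±f(c) ± f(c[m ↦ r]) = 0` for every chain `c`
and every `(m, r) ∈ R`, where a non-monotone `c[m ↦ r]` counts as `0`.

If some `p ∈ Rᵢ` is not below some `q ∈ Rⱼ` with `i < j`, these relations force every cycle to
vanish. Otherwise every transversal of `R` is monotone and any two are joined by changes of one
level at a time, so a cycle is determined by its value on one chain; and an explicit sign vector
`(-1) ^ chainSign R (graph c)` is a nonzero cycle.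
-/

-- The definitions above decide everything with `Classical.propDecidable`; letting it win over
-- `instDecidableEqProd` etc. makes `R \ S` below elaborate to the very terms inside `KBasis`.
attribute [local instance 2000] Classical.propDecidable

namespace SqfIdeal

variable {k : Type w} [Field k] {W : Type u} {I : SqfIdeal W} {R : Finset W} {i : ℤ}

theorem KBasis.card_sdiff (S : KBasis I R i) : ((R \ S.1).card : ℤ) = R.card - i := by
  rw [Finset.card_sdiff_of_subset S.2.1, Nat.cast_sub (Finset.card_le_card S.2.1), S.2.2.1]

theorem evalK_apply (f : kchain k I R i) (S : KBasis I R i) : evalK k f S.1 = f S :=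
  dif_pos S.2

theorem evalK_zero (S : Finset W) : evalK k (0 : kchain k I R i) S = 0 := by
  unfold evalK
  split_ifs <;> rfl

theorem evalK_eq_zero (f : kchain k I R i) {S : Finset W} (hS : R \ S ∉ I.carrier) :
    evalK k f S = 0 :=
  dif_neg fun h => hS h.2.2

theorem koszulD_apply_eq_sum_of_subset (f : kchain k I R i) (S : KBasis I R (i - 1))
    {A : Finset W} (hA : A ⊆ R \ S.1)
    (hzero : ∀ v ∈ R \ S.1, v ∉ A → (R \ S.1).erase v ∉ I.carrier) :
    koszulD k I R i f S = ∑ v ∈ A, (-1 : k) ^ vpos S.1 v * evalK k f (insert v S.1) := by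
  refine (Finset.sum_subset hA fun v hv hvA => ?_).symm
  rw [evalK_eq_zero f (by rw [Finset.sdiff_insert]; exact hzero v hv hvA), mul_zero]

theorem koszulD_eq_zero_of_isEmpty [IsEmpty (KBasis I R i)] : koszulD k I R i = 0 :=
  LinearMap.ext fun f => by rw [Subsingleton.elim f 0, map_zero, LinearMap.zero_apply]

theorem multiBetti_eq_finrank_ker [IsEmpty (KBasis I R (i + 1))] :
    multiBetti k I i R = Module.finrank k (LinearMap.ker (koszulD k I R i)) := by
  rw [multiBetti, koszulD_eq_zero_of_isEmpty (i := i + 1), LinearMap.range_zero, finrank_bot,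
    Nat.sub_zero]

end SqfIdeal

theorem neg_one_pow_mul_self_s12 {A : Type*} [CommRing A] (e : ℕ) : (-1 : A) ^ e * (-1) ^ e = 1 := by
  rw [← mul_pow, neg_one_mul, neg_neg, one_pow]

theorem neg_one_pow_add_neg_one_pow_of_odd {A : Type*} [CommRing A] {a b : ℕ} (h : Odd (a + b)) :
    (-1 : A) ^ a + (-1) ^ b = 0 := by
  have hab : (-1 : A) ^ a * (-1) ^ b = -1 := by rw [← pow_add, h.neg_one_pow]
  linear_combination (-1 : A) ^ a * hab - (-1 : A) ^ b * neg_one_pow_mul_self_s12 (A := A) a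

theorem mul_eq_mul_of_add_eq_zero {A : Type*} [CommRing A] {u v x x' y y' : A}
    (hx : u * x' + v * x = 0) (hy : u * y' + v * y = 0) (hu : u * u = 1) (hv : v * v = 1) :
    x' * y' = x * y := by
  linear_combination (u * y') * hx - (v * x) * hy - (x' * y') * hu + (x * y) * hv

theorem eq_of_forall_update_eq {ι β γ : Type*} [Fintype ι] [DecidableEq ι] {s : ι → Set β}
    {ψ : (ι → β) → γ}
    (h : ∀ c, (∀ i, c i ∈ s i) → ∀ i, ∀ x ∈ s i, ψ (Function.update c i x) = ψ c)
    {c d : ι → β} (hc : ∀ i, c i ∈ s i) (hd : ∀ i, d i ∈ s i) : ψ c = ψ d := by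
  suffices ∀ t : Finset ι, ∀ c, (∀ i, c i ∈ s i) → (∀ i ∉ t, c i = d i) → ψ c = ψ d from
    this Finset.univ c hc fun i hi => absurd (Finset.mem_univ i) hi
  intro t
  induction t using Finset.induction_on with
  | empty => exact fun c _ hcd => congrArg ψ (funext fun i => hcd i (Finset.notMem_empty i))
  | insert a t _ ih =>
    intro c hc hcd
    rw [← h c hc a (d a) (hd a)]
    refine ih _ (fun i => ?_) fun i hi => ?_
    · rcases eq_or_ne i a with rfl | hia
      · rw [Function.update_self]; exact hd i
      · rw [Function.update_of_ne hia]; exact hc i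
    · rcases eq_or_ne i a with rfl | hia
      · exact Function.update_self _ _ _
      · rw [Function.update_of_ne hia]
        exact hcd i fun hi' => (Finset.mem_insert.1 hi').elim hia hi

def precInd {β : Type v} (y x : β) : ZMod 2 := if WellOrderingRel y x then 1 else 0

theorem precInd_self {β : Type v} (x : β) : precInd x x = 0 :=
  if_neg (irrefl_of WellOrderingRel x)

theorem precInd_add_precInd {β : Type v} {x y : β} (h : x ≠ y) :
    precInd x y + precInd y x = 1 := by
  unfold precInd
  rcases trichotomous_of WellOrderingRel x y with hxy | rfl | hyx
  · rw [if_pos hxy, if_neg (asymm_of WellOrderingRel hxy), add_zero]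
  · exact absurd rfl h
  · rw [if_neg (asymm_of WellOrderingRel hyx), if_pos hyx, zero_add]

theorem vpos_cast {β : Type v} (F : Finset β) (x : β) :
    (vpos F x : ZMod 2) = ∑ y ∈ F, precInd y x := by
  rw [vpos, Finset.card_filter, Nat.cast_sum]
  exact Finset.sum_congr rfl fun y _ => by unfold precInd; split_ifs <;> simp

theorem vpos_sdiff_add_vpos {β : Type v} {R U : Finset β} (h : U ⊆ R) (x : β) :
    vpos (R \ U) x + vpos U x = vpos R x := by
  unfold vpos
  rw [← Finset.card_union_of_disjoint (Finset.disjoint_filter_filter Finset.sdiff_disjoint),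
    ← Finset.filter_union, Finset.sdiff_union_of_subset h]

theorem mem_part {n : ℕ} {P : Type u} {R : Finset (Fin n × P)} {i : Fin n} {p : P} :
    p ∈ part R i ↔ (i, p) ∈ R := by
  simp only [part, Finset.mem_image, Finset.mem_filter]
  exact ⟨by rintro ⟨⟨j, q⟩, ⟨hR, rfl⟩, rfl⟩; exact hR, fun h => ⟨_, ⟨h, rfl⟩, rfl⟩⟩

namespace Letterplace

section Sign

variable {ι : Type u} [LinearOrder ι] {P : Type v}

def levelInv (x y : ι × P) : ZMod 2 := if x.1 < y.1 ∧ WellOrderingRel y x then 1 else 0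

theorem levelInv_self (x : ι × P) : levelInv x x = 0 :=
  if_neg fun h => lt_irrefl _ h.1

theorem precInd_add_levelInv_add_levelInv {x y : ι × P} (h : y.1 ≠ x.1) :
    precInd y x + levelInv x y + levelInv y x = if y.1 < x.1 then 1 else 0 := by
  unfold levelInv
  rcases h.lt_or_gt with hlt | hgt
  · simp only [hlt, hlt.not_gt, false_and, true_and, if_true, if_false, add_zero]
    exact precInd_add_precInd fun hyx => h (congrArg Prod.fst hyx)
  · simp only [hgt.not_gt, hgt, false_and, true_and, if_false, add_zero]
    exact CharTwo.add_self_eq_zero _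

def invCount (T : Finset (ι × P)) : ℕ :=
  ∑ x ∈ T, (T.filter fun y => x.1 < y.1 ∧ WellOrderingRel y x).card

/-- Exponent of the sign with which the chain `T ⊆ R` enters the generator of the linear
strand: the Koszul sign of the complement `R \ T` plus the sign sorting `T` by level. -/
def chainSign (R T : Finset (ι × P)) : ℕ := (∑ x ∈ T, vpos R x) + invCount T

theorem invCount_cast (T : Finset (ι × P)) :
    (invCount T : ZMod 2) = ∑ x ∈ T, ∑ y ∈ T, levelInv x y := by
  simp only [invCount, Nat.cast_sum, Finset.card_filter]
  exact Finset.sum_congr rfl fun x _ => Finset.sum_congr rfl fun y _ => by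
    unfold levelInv; split_ifs <;> simp

theorem chainSign_insert (R : Finset (ι × P)) {C : Finset (ι × P)} {x : ι × P} (hx : x ∉ C) :
    (chainSign R (insert x C) : ZMod 2) =
      vpos R x + chainSign R C + ∑ y ∈ C, (levelInv x y + levelInv y x) := by
  simp only [chainSign, Nat.cast_add, Nat.cast_sum, invCount_cast, Finset.sum_insert hx,
    levelInv_self, Finset.sum_add_distrib]
  ring

theorem chainSign_insert_add_vpos {R C : Finset (ι × P)} {x x' : ι × P} (hxx' : x ≠ x')
    (hC : ∀ y ∈ C, y.1 ≠ x.1) (hx'C : x' ∉ C) (hR : insert x (insert x' C) ⊆ R) :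
    (chainSign R (insert x C) : ZMod 2) + vpos (R \ insert x (insert x' C)) x =
      chainSign R C + precInd x' x + ∑ y ∈ C, if y.1 < x.1 then 1 else 0 := by
  have hxC : x ∉ C := fun h => hC x h rfl
  have hsplit := congrArg (Nat.cast : ℕ → ZMod 2) (vpos_sdiff_add_vpos hR x)
  push_cast at hsplit
  rw [vpos_cast (insert x _), Finset.sum_insert (by simp [hxx', hxC]), precInd_self,
    Finset.sum_insert hx'C, zero_add] at hsplit
  rw [chainSign_insert R hxC, ← hsplit,
    ← Finset.sum_congr rfl fun y hy => precInd_add_levelInv_add_levelInv (hC y hy)]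
  simp only [Finset.sum_add_distrib]
  linear_combination (CharTwo.add_self_eq_zero (vpos (R \ insert x (insert x' C)) x : ZMod 2))

-- Every `y ∈ C` contributes the same `[y.1 < a.1]` for `a` and for `b`, leaving
-- `precInd a b + precInd b a = 1`.
theorem odd_vpos_add_chainSign {R C : Finset (ι × P)} {a b : ι × P} (hab : a ≠ b)
    (hlev : a.1 = b.1) (hC : ∀ y ∈ C, y.1 ≠ a.1) (hR : insert b (insert a C) ⊆ R) :
    Odd (vpos (R \ insert b (insert a C)) a + chainSign R (insert b C) +
      (vpos (R \ insert b (insert a C)) b + chainSign R (insert a C))) := by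
  have hbC : b ∉ C := fun h => hC b h hlev.symm
  have haC : a ∉ C := fun h => hC a h rfl
  have ha := chainSign_insert_add_vpos hab hC hbC (Finset.insert_comm a b C ▸ hR)
  have hb := chainSign_insert_add_vpos hab.symm (hlev ▸ hC) haC hR
  rw [Finset.insert_comm] at ha
  rw [← hlev] at hb
  rw [← ZMod.natCast_eq_one_iff_odd]
  push_cast
  linear_combination ha + hb + precInd_add_precInd hab
    + CharTwo.add_self_eq_zero (chainSign R C : ZMod 2)
    + CharTwo.add_self_eq_zero (∑ y ∈ C, if y.1 < a.1 then (1 : ZMod 2) else 0)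

end Sign

variable {P : Type u} {n : ℕ}

def graph (c : Fin n → P) : Finset (Fin n × P) :=
  Finset.univ.image fun l => (l, c l)

theorem mem_graph {c : Fin n → P} {x : Fin n × P} : x ∈ graph c ↔ x.2 = c x.1 := by
  simp only [graph, Finset.mem_image, Finset.mem_univ, true_and]
  exact ⟨by rintro ⟨l, rfl⟩; rfl, fun h => ⟨x.1, Prod.ext rfl h.symm⟩⟩

theorem mk_mem_graph (c : Fin n → P) (l : Fin n) : (l, c l) ∈ graph c :=
  mem_graph.2 rfl

theorem card_graph (c : Fin n → P) : (graph c).card = n := by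
  rw [graph, Finset.card_image_of_injective _ fun l l' h => congrArg Prod.fst h,
    Finset.card_univ, Fintype.card_fin]

theorem graph_subset_iff {c : Fin n → P} {T : Finset (Fin n × P)} :
    graph c ⊆ T ↔ ∀ l, (l, c l) ∈ T := by
  simp only [graph, Finset.image_subset_iff, Finset.mem_univ, true_imp_iff]

theorem graph_update (c : Fin n → P) (m : Fin n) (r : P) :
    graph (Function.update c m r) = insert (m, r) ((graph c).erase (m, c m)) := by
  ext ⟨l, p⟩
  simp only [mem_graph, Finset.mem_insert, Finset.mem_erase, Prod.mk.injEq]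
  by_cases hl : l = m
  · subst hl
    simp only [Function.update_self, true_and]
    tauto
  · simp [hl]

theorem exists_graph_subset {R : Finset (Fin n × P)} (hne : ∀ i, (part R i).Nonempty) :
    ∃ c : Fin n → P, graph c ⊆ R :=
  ⟨fun i => (hne i).choose, graph_subset_iff.2 fun i => mem_part.1 (hne i).choose_spec⟩

theorem fst_ne_of_mem_erase_graph {c : Fin n → P} {m : Fin n} {y : Fin n × P}
    (hy : y ∈ (graph c).erase (m, c m)) : y.1 ≠ m := fun hym =>
  Finset.ne_of_mem_erase hy (Prod.ext hym (by rw [mem_graph.1 (Finset.mem_of_mem_erase hy), hym]))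

theorem graph_update_subset {c : Fin n → P} {T : Finset (Fin n × P)} (hcT : graph c ⊆ T)
    {m : Fin n} {r : P} (hr : (m, r) ∈ T) : graph (Function.update c m r) ⊆ T := by
  rw [graph_update]
  exact Finset.insert_subset hr ((Finset.erase_subset _ _).trans hcT)

variable [PartialOrder P]

theorem mem_letterplace_iff {T : Finset (Fin n × P)} :
    T ∈ (letterplace n P).carrier ↔ ∃ c, Monotone c ∧ graph c ⊆ T := by
  simp only [graph_subset_iff]
  rfl

theorem graph_mem_letterplace_iff {c : Fin n → P} :
    graph c ∈ (letterplace n P).carrier ↔ Monotone c := by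
  refine ⟨fun h => ?_, fun hc => mem_letterplace_iff.2 ⟨c, hc, subset_rfl⟩⟩
  obtain ⟨c', hc', hsub⟩ := mem_letterplace_iff.1 h
  have : c' = c := funext fun l => mem_graph.1 (graph_subset_iff.1 hsub l)
  rwa [← this]

theorem card_le_of_mem_letterplace {T : Finset (Fin n × P)}
    (hT : T ∈ (letterplace n P).carrier) : n ≤ T.card := by
  obtain ⟨c, -, hsub⟩ := mem_letterplace_iff.1 hT
  exact (card_graph c).ge.trans (Finset.card_le_card hsub)

theorem exists_eq_graph {T : Finset (Fin n × P)} (hT : T ∈ (letterplace n P).carrier)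
    (hcard : T.card = n) : ∃ c, Monotone c ∧ T = graph c := by
  obtain ⟨c, hc, hsub⟩ := mem_letterplace_iff.1 hT
  exact ⟨c, hc, (Finset.eq_of_subset_of_card_le hsub (by rw [hcard, card_graph])).symm⟩

theorem exists_eq_insert_graph {T : Finset (Fin n × P)}
    (hT : T ∈ (letterplace n P).carrier) (hcard : T.card = n + 1) :
    ∃ c, Monotone c ∧ ∃ m r, r ≠ c m ∧ T = insert (m, r) (graph c) := by
  obtain ⟨c, hc, hsub⟩ := mem_letterplace_iff.1 hT
  obtain ⟨⟨m, r⟩, hmr⟩ : (T \ graph c).Nonempty := by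
    rw [← Finset.card_pos, Finset.card_sdiff_of_subset hsub, hcard, card_graph,
      Nat.add_sub_cancel_left]
    exact Nat.one_pos
  obtain ⟨hmrT, hnot⟩ := Finset.mem_sdiff.1 hmr
  refine ⟨c, hc, m, r, fun h => hnot (mem_graph.2 h), ?_⟩
  refine (Finset.eq_of_subset_of_card_le (Finset.insert_subset hmrT hsub) ?_).symm
  rw [Finset.card_insert_of_notMem hnot, card_graph, hcard]

/-- Removing from `insert (m, r) (graph c)` a point off level `m` leaves that level empty. -/
theorem erase_insert_graph_notMem {c : Fin n → P} {m : Fin n} (r : P) {v : Fin n × P}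
    (hv : v ∈ graph c) (hvm : v.1 ≠ m) :
    (insert (m, r) (graph c)).erase v ∉ (letterplace n P).carrier := by
  rintro ⟨c', -, hc'⟩
  obtain ⟨hne, hmem⟩ := Finset.mem_erase.1 (hc' v.1)
  rcases Finset.mem_insert.1 hmem with h | h
  · exact hvm (congrArg Prod.fst h)
  · exact hne (Prod.ext rfl ((mem_graph.1 h).trans (mem_graph.1 hv).symm))

open SqfIdeal

variable {k : Type w} [Field k] {R : Finset (Fin n × P)}

instance isEmpty_kBasis : IsEmpty (KBasis (letterplace n P) R ((R.card : ℤ) - n + 1)) :=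
  ⟨fun S => by
    have h := card_le_of_mem_letterplace S.2.2.2
    have hcard := S.card_sdiff
    have : (n : ℤ) ≤ (R \ S.1).card := by exact_mod_cast h
    linarith⟩

theorem exists_eq_sdiff_graph (S : KBasis (letterplace n P) R ((R.card : ℤ) - n)) :
    ∃ c, Monotone c ∧ graph c ⊆ R ∧ S.1 = R \ graph c := by
  obtain ⟨c, hc, hT⟩ := exists_eq_graph S.2.2.2 (by
    have h := S.card_sdiff
    rw [sub_sub_cancel] at h
    exact_mod_cast h)
  refine ⟨c, hc, hT ▸ Finset.sdiff_subset, ?_⟩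
  rw [← hT, Finset.sdiff_sdiff_eq_self S.2.1]

theorem kchain_ext_graph {f g : kchain k (letterplace n P) R ((R.card : ℤ) - n)}
    (h : ∀ c, Monotone c → graph c ⊆ R → evalK k f (R \ graph c) = evalK k g (R \ graph c)) :
    f = g := by
  funext S
  obtain ⟨c, hc, hcR, hS⟩ := exists_eq_sdiff_graph S
  rw [← evalK_apply f, ← evalK_apply g, hS, h c hc hcR]

theorem evalK_sdiff_graph_of_not_monotone {i : ℤ} (f : kchain k (letterplace n P) R i)
    {c : Fin n → P} (hc : ¬Monotone c) : evalK k f (R \ graph c) = 0 := by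
  refine evalK_eq_zero f fun h => hc (graph_mem_letterplace_iff.1 ?_)
  refine (letterplace n P).up_closed h ?_
  simp only [Finset.subset_iff, Finset.mem_sdiff]
  tauto

theorem evalK_koszulD_sdiff_insert_graph (f : kchain k (letterplace n P) R ((R.card : ℤ) - n))
    {c : Fin n → P} (hc : Monotone c) (hcR : graph c ⊆ R) {m : Fin n} {r : P}
    (hr : (m, r) ∈ R) (hrc : r ≠ c m) :
    evalK k (koszulD k (letterplace n P) R ((R.card : ℤ) - n) f) (R \ insert (m, r) (graph c)) =
      (-1 : k) ^ vpos (R \ insert (m, r) (graph c)) (m, c m) *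
          evalK k f (R \ graph (Function.update c m r)) +
        (-1 : k) ^ vpos (R \ insert (m, r) (graph c)) (m, r) * evalK k f (R \ graph c) := by
  have ha : (m, c m) ∈ graph c := mk_mem_graph c m
  have hb : (m, r) ∉ graph c := fun h => hrc (mem_graph.1 h)
  have hab : (m, c m) ≠ (m, r) := fun h => hrc (congrArg Prod.snd h).symm
  have hUa : (insert (m, r) (graph c)).erase (m, c m) = graph (Function.update c m r) := by
    rw [Finset.erase_insert_of_ne hab.symm, graph_update]
  have hUb : (insert (m, r) (graph c)).erase (m, r) = graph c := Finset.erase_insert hb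
  set U := insert (m, r) (graph c)
  have hUR : U ⊆ R := Finset.insert_subset hr hcR
  have hS : R \ U ⊆ R ∧ ((R \ U).card : ℤ) = (R.card : ℤ) - n - 1 ∧
      R \ (R \ U) ∈ (letterplace n P).carrier := by
    refine ⟨Finset.sdiff_subset, ?_, ?_⟩
    · have hU : U.card = n + 1 := by rw [Finset.card_insert_of_notMem hb, card_graph]
      rw [Finset.card_sdiff_of_subset hUR, Nat.cast_sub (Finset.card_le_card hUR), hU]
      push_cast
      ring
    · rw [Finset.sdiff_sdiff_eq_self hUR]
      exact mem_letterplace_iff.2 ⟨c, hc, Finset.subset_insert _ _⟩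
  refine (evalK_apply _ (⟨R \ U, hS⟩ : KBasis _ R _)).trans ?_
  rw [koszulD_apply_eq_sum_of_subset f ⟨R \ U, hS⟩ (A := {(m, c m), (m, r)}), Finset.sum_pair hab,
    ← Finset.sdiff_erase (hUR (Finset.mem_insert_of_mem ha)), ← Finset.sdiff_erase hr, hUa, hUb]
  · rw [Finset.sdiff_sdiff_eq_self hUR]
    exact Finset.insert_subset (Finset.mem_insert_of_mem ha)
      (Finset.singleton_subset_iff.2 (Finset.mem_insert_self _ _))
  · intro v hv hvA
    rw [Finset.sdiff_sdiff_eq_self hUR] at hv ⊢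
    simp only [Finset.mem_insert, Finset.mem_singleton, not_or] at hvA
    have hvc : v ∈ graph c := (Finset.mem_insert.1 hv).resolve_left hvA.2
    exact erase_insert_graph_notMem r hvc
      (fst_ne_of_mem_erase_graph (Finset.mem_erase.2 ⟨hvA.1, hvc⟩))

section Cycles

variable {f : kchain k (letterplace n P) R ((R.card : ℤ) - n)}

theorem evalK_sdiff_graph_relation (hf : koszulD k (letterplace n P) R _ f = 0)
    {c : Fin n → P} (hc : Monotone c) (hcR : graph c ⊆ R) {m : Fin n} {r : P}
    (hr : (m, r) ∈ R) (hrc : r ≠ c m) :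
    (-1 : k) ^ vpos (R \ insert (m, r) (graph c)) (m, c m) *
          evalK k f (R \ graph (Function.update c m r)) +
        (-1 : k) ^ vpos (R \ insert (m, r) (graph c)) (m, r) * evalK k f (R \ graph c) = 0 := by
  rw [← evalK_koszulD_sdiff_insert_graph f hc hcR hr hrc, hf, evalK_zero]

theorem evalK_sdiff_graph_eq_zero_of_update (hf : koszulD k (letterplace n P) R _ f = 0)
    {c : Fin n → P} (hc : Monotone c) (hcR : graph c ⊆ R) {m : Fin n} {r : P}
    (hr : (m, r) ∈ R) (hrc : r ≠ c m)
    (hupd : evalK k f (R \ graph (Function.update c m r)) = 0) :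
    evalK k f (R \ graph c) = 0 := by
  have h := evalK_sdiff_graph_relation hf hc hcR hr hrc
  rw [hupd, mul_zero, zero_add] at h
  exact (mul_eq_zero.1 h).resolve_left (pow_ne_zero _ (neg_ne_zero.2 one_ne_zero))

/-- If some `p ∈ Rᵢ` is not below some `q ∈ Rⱼ` with `i < j`, every chain can be moved through
`q` and then broken by `p`, so a cycle vanishes on all chains. -/
theorem evalK_sdiff_graph_eq_zero_of_not_le (hf : koszulD k (letterplace n P) R _ f = 0)
    {i j : Fin n} (hij : i < j) {p q : P} (hp : (i, p) ∈ R) (hq : (j, q) ∈ R) (hpq : ¬p ≤ q)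
    {c : Fin n → P} (hc : Monotone c) (hcR : graph c ⊆ R) :
    evalK k f (R \ graph c) = 0 := by
  have through_q : ∀ c, Monotone c → graph c ⊆ R → c j = q → evalK k f (R \ graph c) = 0 := by
    intro c hc hcR hcj
    refine evalK_sdiff_graph_eq_zero_of_update hf hc hcR hp
      (fun h => hpq (h ▸ hcj ▸ hc hij.le)) (evalK_sdiff_graph_of_not_monotone f fun hmono => ?_)
    have := hmono hij.le
    rw [Function.update_self, Function.update_of_ne hij.ne', hcj] at this
    exact hpq this
  by_cases hcj : c j = q
  · exact through_q c hc hcR hcj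
  refine evalK_sdiff_graph_eq_zero_of_update hf hc hcR hq (Ne.symm hcj) ?_
  rcases em (Monotone (Function.update c j q)) with hmono | hmono
  · exact through_q _ hmono (graph_update_subset hcR hq) (Function.update_self _ _ _)
  · exact evalK_sdiff_graph_of_not_monotone f hmono

theorem ker_koszulD_eq_bot {i j : Fin n} (hij : i < j) {p q : P} (hp : (i, p) ∈ R)
    (hq : (j, q) ∈ R) (hpq : ¬p ≤ q) :
    LinearMap.ker (koszulD k (letterplace n P) R ((R.card : ℤ) - n)) = ⊥ :=
  (Submodule.eq_bot_iff _).2 fun _ hf => kchain_ext_graph fun _ hc hcR => by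
    rw [evalK_sdiff_graph_eq_zero_of_not_le (LinearMap.mem_ker.1 hf) hij hp hq hpq hc hcR,
      evalK_zero]

end Cycles

variable (k R) in
def strandGenerator : kchain k (letterplace n P) R ((R.card : ℤ) - n) :=
  fun S => (-1 : k) ^ chainSign R (R \ S.1)

variable (k) in
theorem evalK_strandGenerator {c : Fin n → P} (hc : Monotone c) (hcR : graph c ⊆ R) :
    evalK k (strandGenerator k R) (R \ graph c) = (-1 : k) ^ chainSign R (graph c) := by
  have hS : R \ graph c ⊆ R ∧ ((R \ graph c).card : ℤ) = R.card - n ∧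
      R \ (R \ graph c) ∈ (letterplace n P).carrier := by
    refine ⟨Finset.sdiff_subset, ?_, ?_⟩
    · rw [Finset.card_sdiff_of_subset hcR, Nat.cast_sub (Finset.card_le_card hcR), card_graph]
    · rw [Finset.sdiff_sdiff_eq_self hcR]
      exact graph_mem_letterplace_iff.2 hc
  rw [evalK, dif_pos hS, strandGenerator, Finset.sdiff_sdiff_eq_self hcR]

theorem koszulD_strandGenerator (hmono : ∀ c : Fin n → P, graph c ⊆ R → Monotone c) :
    koszulD k (letterplace n P) R _ (strandGenerator k R) = 0 := by
  funext S
  have hcard : (R \ S.1).card = n + 1 := by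
    have h : ((R \ S.1).card : ℤ) = n + 1 := by rw [S.card_sdiff]; ring
    exact_mod_cast h
  obtain ⟨c, hc, m, r, hrc, hT⟩ := exists_eq_insert_graph S.2.2.2 hcard
  have hUR : insert (m, r) (graph c) ⊆ R := hT ▸ Finset.sdiff_subset
  have hr : (m, r) ∈ R := hUR (Finset.mem_insert_self _ _)
  have hcR : graph c ⊆ R := (Finset.subset_insert _ _).trans hUR
  have hc'R := graph_update_subset hcR hr
  have hsign := odd_vpos_add_chainSign (R := R) (a := (m, c m)) (b := (m, r))
    (C := (graph c).erase (m, c m))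
    (fun h => hrc (congrArg Prod.snd h).symm) rfl (fun y hy => fst_ne_of_mem_erase_graph hy)
    (by rwa [Finset.insert_erase (mk_mem_graph c m)])
  rw [Finset.insert_erase (mk_mem_graph c m), ← graph_update] at hsign
  have hS : S.1 = R \ insert (m, r) (graph c) := by rw [← hT, Finset.sdiff_sdiff_eq_self S.2.1]
  rw [← evalK_apply (koszulD k _ R _ _) S, hS, Pi.zero_apply,
    evalK_koszulD_sdiff_insert_graph _ hc hcR hr hrc, evalK_strandGenerator k hc hcR,
    evalK_strandGenerator k (hmono _ hc'R) hc'R, ← pow_add, ← pow_add]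
  exact neg_one_pow_add_neg_one_pow_of_odd hsign

theorem ker_koszulD_eq_span (hne : ∀ i, (part R i).Nonempty)
    (hmono : ∀ c : Fin n → P, graph c ⊆ R → Monotone c) :
    LinearMap.ker (koszulD k (letterplace n P) R ((R.card : ℤ) - n)) =
      k ∙ strandGenerator k R := by
  have hgen := koszulD_strandGenerator (k := k) hmono
  refine le_antisymm (fun f hf => ?_) ((Submodule.span_singleton_le_iff_mem _ _).2 hgen)
  obtain ⟨c₀, hc₀R⟩ := exists_graph_subset hne
  -- `f` and the generator obey the same two-term relations with coefficients `±1`,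
  -- so their product is unchanged by moving one level of a chain.
  let ψ (c : Fin n → P) :=
    evalK k f (R \ graph c) * evalK k (strandGenerator k R) (R \ graph c)
  have hψ : ∀ c : Fin n → P, (∀ i, c i ∈ {p | (i, p) ∈ R}) →
      ∀ m, ∀ r ∈ {p | (m, p) ∈ R}, ψ (Function.update c m r) = ψ c := by
    intro c hcR m r hr
    replace hcR : graph c ⊆ R := graph_subset_iff.2 hcR
    rcases eq_or_ne r (c m) with rfl | hrc
    · rw [Function.update_eq_self]
    · exact mul_eq_mul_of_add_eq_zero
        (evalK_sdiff_graph_relation (LinearMap.mem_ker.1 hf) (hmono c hcR) hcR hr hrc)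
        (evalK_sdiff_graph_relation hgen (hmono c hcR) hcR hr hrc)
        (neg_one_pow_mul_self_s12 _) (neg_one_pow_mul_self_s12 _)
  refine Submodule.mem_span_singleton.2 ⟨ψ c₀, kchain_ext_graph fun c hc hcR => ?_⟩
  rw [evalK_smul, eq_of_forall_update_eq hψ (graph_subset_iff.1 hc₀R) (graph_subset_iff.1 hcR)]
  simp only [ψ, evalK_strandGenerator k hc hcR]
  rw [mul_assoc, neg_one_pow_mul_self_s12, mul_one]

theorem strandGenerator_ne_zero (hne : ∀ i, (part R i).Nonempty)
    (hmono : ∀ c : Fin n → P, graph c ⊆ R → Monotone c) : strandGenerator k R ≠ 0 := by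
  obtain ⟨c, hcR⟩ := exists_graph_subset hne
  intro h
  have := evalK_strandGenerator k (hmono c hcR) hcR
  rw [h, evalK_zero] at this
  exact pow_ne_zero _ (neg_ne_zero.2 one_ne_zero) this.symm

end Letterplace

theorem statement_12_general {P : Type u} [PartialOrder P] (k : Type w)
    [Field k] (n : ℕ) (R : Finset (Fin (n + 1) × P))
    (hne : ∀ i, (part R i).Nonempty) :
    (multiBetti k (letterplace (n + 1) P) ((R.card : ℤ) - (n + 1)) R ≠ 0 ↔
      ∀ i : Fin n, ∀ p ∈ part R i.castSucc, ∀ q ∈ part R i.succ, p ≤ q) ∧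
    ((∀ i : Fin n, ∀ p ∈ part R i.castSucc, ∀ q ∈ part R i.succ, p ≤ q) →
      multiBetti k (letterplace (n + 1) P) ((R.card : ℤ) - (n + 1)) R = 1) := by
  have hdeg : (R.card : ℤ) - (n + 1) = R.card - ((n + 1 : ℕ) : ℤ) := by push_cast; rfl
  rw [hdeg, SqfIdeal.multiBetti_eq_finrank_ker]
  by_cases hle : ∀ i : Fin n, ∀ p ∈ part R i.castSucc, ∀ q ∈ part R i.succ, p ≤ q
  · have hmono (c : Fin (n + 1) → P) (hcR : Letterplace.graph c ⊆ R) : Monotone c :=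
      Fin.monotone_iff_le_succ.2 fun i => hle i _
        (mem_part.2 (Letterplace.graph_subset_iff.1 hcR _)) _
        (mem_part.2 (Letterplace.graph_subset_iff.1 hcR _))
    rw [Letterplace.ker_koszulD_eq_span hne hmono,
      finrank_span_singleton (Letterplace.strandGenerator_ne_zero hne hmono)]
    exact ⟨iff_of_true one_ne_zero hle, fun _ => rfl⟩
  · obtain ⟨i, p, hp, q, hq, hpq⟩ :
        ∃ i : Fin n, ∃ p ∈ part R i.castSucc, ∃ q ∈ part R i.succ, ¬p ≤ q := by
      push Not at hle
      exact hle
    rw [Letterplace.ker_koszulD_eq_bot Fin.castSucc_lt_succ (mem_part.1 hp) (mem_part.1 hq)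
      hpq, finrank_bot]
    exact ⟨iff_of_false (fun h => h rfl) hle, fun h => absurd h hle⟩

/-- A multidegree `R ⊆ [n] × P` (with nonempty parts; here
`n` is rendered as `n + 1`) occurs in the first (`n`-)linear strand of the
resolution of `L(n,P)`, i.e. `β_{|R|-n,R}(L(n,P)) ≠ 0`, iff for every
`i = 1, …, n-1`, every `p ∈ Rᵢ` and `q ∈ R_{i+1}` satisfy `p ≤ q`; and in
that case `β_{|R|-n,R}(L(n,P)) = 1`. -/
theorem statement_12 {P : Type u} [PartialOrder P] [Fintype P] (k : Type w)
    [Field k] (n : ℕ) (R : Finset (Fin (n + 1) × P))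
    (hne : ∀ i, (part R i).Nonempty) :
    (multiBetti k (letterplace (n + 1) P) ((R.card : ℤ) - (n + 1)) R ≠ 0 ↔
      ∀ i : Fin n, ∀ p ∈ part R i.castSucc, ∀ q ∈ part R i.succ, p ≤ q) ∧
    ((∀ i : Fin n, ∀ p ∈ part R i.castSucc, ∀ q ∈ part R i.succ, p ≤ q) →
      multiBetti k (letterplace (n + 1) P) ((R.card : ℤ) - (n + 1)) R = 1) :=
  statement_12_general k n R hne

end
end
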